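/- arXiv:1005.2320 — 3 statements merged into one kernel-verified Lean document; each statement's English description precedes it below -/
import Mathlib

section
/- Let N be an integer with N > 2n, and for a subset C = {c_1 < … < c_a} of {1,…,2n} define wt(C) = Σ_{r=1}^{a} c_r·N^{n−r}. Then for every i with 1 ≤ i ≤ n−1: wt(I_i) + wt(K_{i−1}) = wt(J′_i) + wt(J_{i−1}), and wt(I_i) + wt(K_{i−1}) < wt(J_i) + wt(J′_{i−1}). -/
noncomputable section

namespace SpBranch


/-! Elements of `Fin (2*n)` carry the 1-based label `(x : ℕ) + 1`. -/

/-- The column set `I_i = {1, …, i}` (1-based labels). -/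
def Iset (n i : ℕ) : Finset (Fin (2*n)) :=
  Finset.univ.filter (fun x => (x : ℕ) + 1 ≤ i)

/-- The column set `J_j = {1, …, j} ∪ {n}` (1-based labels). -/
def Jset (n j : ℕ) : Finset (Fin (2*n)) :=
  Finset.univ.filter (fun x => (x : ℕ) + 1 ≤ j ∨ (x : ℕ) + 1 = n)

/-- The column set `J′_j = {1, …, j} ∪ {n+1}` (1-based labels). -/
def JPset (n j : ℕ) : Finset (Fin (2*n)) :=
  Finset.univ.filter (fun x => (x : ℕ) + 1 ≤ j ∨ (x : ℕ) + 1 = n + 1)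

/-- The column set `K_k = {1, …, k} ∪ {n, n+1}` (1-based labels). -/
def Kset (n k : ℕ) : Finset (Fin (2*n)) :=
  Finset.univ.filter (fun x => (x : ℕ) + 1 ≤ k ∨ (x : ℕ) + 1 = n ∨ (x : ℕ) + 1 = n + 1)

/-- The underlying set of the poset `𝓛`. -/
def LSet (n : ℕ) : Set (Finset (Fin (2*n))) :=
  {C | (∃ i, 1 ≤ i ∧ i ≤ n - 1 ∧ C = Iset n i) ∨
       (∃ j, j ≤ n - 1 ∧ C = Jset n j) ∨
       (∃ j, j ≤ n - 1 ∧ C = JPset n j) ∨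
       (∃ k, k ≤ n - 2 ∧ C = Kset n k)}

/-- The generating relations of the partial order `⪯` on `𝓛`:
`J_i ⪯ J′_i ⪯ I_i ⪯ J_{i−1}`, `J′_i ⪯ K_{i−1} ⪯ J_{i−1}`, `J_{i−1} ⪯ J′_{i−1}` for `1 ≤ i ≤ n−1`. -/
def LGen (n : ℕ) (C C' : Finset (Fin (2*n))) : Prop :=
  ∃ i, 1 ≤ i ∧ i ≤ n - 1 ∧
    ((C = Jset n i ∧ C' = JPset n i) ∨
     (C = JPset n i ∧ C' = Iset n i) ∨
     (C = JPset n i ∧ C' = Kset n (i-1)) ∨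
     (C = Iset n i ∧ C' = Jset n (i-1)) ∨
     (C = Kset n (i-1) ∧ C' = Jset n (i-1)) ∨
     (C = Jset n (i-1) ∧ C' = JPset n (i-1)))

/-- The partial order `⪯` on `𝓛`, generated by `LGen`. -/
def LLE (n : ℕ) : Finset (Fin (2*n)) → Finset (Fin (2*n)) → Prop :=
  Relation.ReflTransGen (LGen n)

/-- A multichain in `𝓛`: a finite weakly increasing sequence of elements of `𝓛`. -/
def IsMultichain (n : ℕ) (l : List (Finset (Fin (2*n)))) : Prop :=
  (∀ C ∈ l, C ∈ LSet n) ∧ l.Chain' (LLE n)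

/-- `δ_C`: the minor of `X` on rows `1, …, |C|` and columns `C`. -/
def deltaFn (n : ℕ) (C : Finset (Fin (2*n))) (X : Matrix (Fin (2*n)) (Fin (2*n)) ℂ) : ℂ :=
  Matrix.det (Matrix.of fun i j : Fin C.card =>
    X (Fin.castLE (le_trans C.card_le_univ (by simp)) i) ((C.orderIsoOfFin rfl j).1))

/-- The standard monomial `δ_Δ = δ_{C_1} ⋯ δ_{C_r}` attached to a list `Δ = (C_1, …, C_r)`. -/
def stdMonomial (n : ℕ) (l : List (Finset (Fin (2*n)))) (X : Matrix (Fin (2*n)) (Fin (2*n)) ℂ) : ℂ :=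
  (l.map (fun C => deltaFn n C X)).prod

/-- `f_i = #{j : |C_j| ≥ i}` for a list of column sets. -/
def shapeF (n : ℕ) (l : List (Finset (Fin (2*n)))) (i : ℕ) : ℕ :=
  (l.map (fun C => if i ≤ C.card then 1 else 0)).sum

/-- `d_k` = total number of occurrences of the (1-based) label `k` among the entries of the `C_j`. -/
def shapeD (n : ℕ) (l : List (Finset (Fin (2*n)))) (k : ℕ) : ℕ :=
  (l.map (fun C => if ∃ x : Fin (2*n), x ∈ C ∧ (x : ℕ) + 1 = k then 1 else 0)).sum

/-- `Δ` has shape `F/D` (with `F = (f_1, …, f_n)`, `D = (d_1, …, d_{n-1})`, read as functions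
on 1-based indices). -/
def HasShape (n : ℕ) (l : List (Finset (Fin (2*n)))) (d f : ℕ → ℕ) : Prop :=
  (∀ i, 1 ≤ i → shapeF n l i = f i) ∧ (∀ k, 1 ≤ k → k ≤ n - 1 → shapeD n l k = d k)

/-- A Young diagram with at most `m` rows, recorded as a function on 1-based indices. -/
def IsYoung (m : ℕ) (a : ℕ → ℕ) : Prop :=
  (∀ j k, 1 ≤ j → j ≤ k → a k ≤ a j) ∧ (∀ k, m < k → a k = 0)

/-- `A ⊑ B` : `b_i ≥ a_i ≥ b_{i+1}` for all `i ≥ 1`. -/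
def Interlaces (a b : ℕ → ℕ) : Prop :=
  ∀ i, 1 ≤ i → a i ≤ b i ∧ b (i+1) ≤ a i

/-- The skew-symmetric Gram matrix `[[0, Q_n], [−Q_n, 0]]`. -/
def Jmat (n : ℕ) : Matrix (Fin (2*n)) (Fin (2*n)) ℂ :=
  Matrix.of fun i j =>
    if (i : ℕ) + (j : ℕ) + 1 = 2*n then (if (i : ℕ) < n then 1 else -1) else 0

/-- `G_n = Sp_{2n}(ℂ)`, as a set of matrices. -/
def SpSet (n : ℕ) : Set (Matrix (Fin (2*n)) (Fin (2*n)) ℂ) :=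
  {g | IsUnit g ∧ g.transpose * Jmat n * g = Jmat n}

/-- `U_n⁻`: lower triangular matrices in `G_n` with 1's on the diagonal. -/
def UnMinusSet (n : ℕ) : Set (Matrix (Fin (2*n)) (Fin (2*n)) ℂ) :=
  {g | g ∈ SpSet n ∧ (∀ i j : Fin (2*n), i < j → g i j = 0) ∧ (∀ i, g i i = 1)}

/-- `U_{n−1}`: the image in `G_n` of the upper triangular unipotent subgroup of `G_{n−1}`,
under the embedding `[[A,B],[C,D]] ↦ [[A,0,B],[0,I_2,0],[C,0,D]]`; equivalently, upper
triangular unipotent elements of `G_n` whose rows and columns with (1-based) indices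
`n` and `n+1` agree with the identity matrix. -/
def Un1Set (n : ℕ) : Set (Matrix (Fin (2*n)) (Fin (2*n)) ℂ) :=
  {g | g ∈ SpSet n ∧ (∀ i j : Fin (2*n), j < i → g i j = 0) ∧ (∀ i, g i i = 1) ∧
    (∀ i j : Fin (2*n), ((i : ℕ) + 1 = n ∨ (i : ℕ) = n ∨ (j : ℕ) + 1 = n ∨ (j : ℕ) = n) →
      g i j = if i = j then 1 else 0)}

/-- `fb` is the restriction to `G_n` of a polynomial function on `M_{2n}(ℂ)`. -/
def IsPolyFn (n : ℕ) (fb : ↥(SpSet n) → ℂ) : Prop :=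
  ∃ P : MvPolynomial (Fin (2*n) × Fin (2*n)) ℂ,
    ∀ x : ↥(SpSet n),
      fb x = MvPolynomial.eval (fun rc => (x : Matrix (Fin (2*n)) (Fin (2*n)) ℂ) rc.1 rc.2) P

/-- `fb(u⁻¹ x v) = fb(x)` for `u ∈ U_n⁻`, `v ∈ U_{n−1}`. -/
def IsUInvariant (n : ℕ) (fb : ↥(SpSet n) → ℂ) : Prop :=
  ∀ u ∈ UnMinusSet n, ∀ v ∈ Un1Set n, ∀ x y : ↥(SpSet n),
    (y : Matrix (Fin (2*n)) (Fin (2*n)) ℂ) =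
      u⁻¹ * (x : Matrix (Fin (2*n)) (Fin (2*n)) ℂ) * v → fb y = fb x

/-- The branching algebra `B`, as a set of functions on `G_n`. -/
def BSet (n : ℕ) : Set (↥(SpSet n) → ℂ) :=
  {fb | IsPolyFn n fb ∧ IsUInvariant n fb}

/-- `t = diag(t_1, …, t_n, t_n⁻¹, …, t_1⁻¹)` (1-based data `t : ℕ → ℂ`). -/
def torusT (n : ℕ) (t : ℕ → ℂ) : Matrix (Fin (2*n)) (Fin (2*n)) ℂ :=
  Matrix.diagonal (fun p => if (p : ℕ) + 1 ≤ n then t ((p : ℕ) + 1) else (t (2*n - (p : ℕ)))⁻¹)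

/-- `s = diag(s_1, …, s_{n−1}, 1, 1, s_{n−1}⁻¹, …, s_1⁻¹)` (1-based data `s : ℕ → ℂ`). -/
def torusS (n : ℕ) (s : ℕ → ℂ) : Matrix (Fin (2*n)) (Fin (2*n)) ℂ :=
  Matrix.diagonal (fun p => if (p : ℕ) + 1 ≤ n - 1 then s ((p : ℕ) + 1)
    else if (p : ℕ) + 1 = n ∨ (p : ℕ) = n then 1 else (s (2*n - (p : ℕ)))⁻¹)



/-- The weight `wt(C) = Σ_r c_r N^{n−r}` of a column set (1-based entries `c_1 < c_2 < …`). -/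
def wtC (n N : ℕ) (C : Finset (Fin (2*n))) : ℕ :=
  ∑ r : Fin C.card, (((C.orderIsoOfFin rfl r).1 : ℕ) + 1) * N ^ (n - ((r : ℕ) + 1))

/-- A pair of Young diagrams `(D, F)` is of order type `σ` (where `σ i = true` means `≥`,
`σ i = false` means `≤`): for `1 ≤ i ≤ n−1`, `σ_i = ≥` implies `d_i ≥ f_{i+1}` and
`σ_i = ≤` implies `d_i ≤ f_{i+1}`. -/
def OfOrderType (n : ℕ) (σ : ℕ → Bool) (d f : ℕ → ℕ) : Prop :=
  ∀ i, 1 ≤ i → i ≤ n - 1 →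
    (σ i = true → f (i+1) ≤ d i) ∧ (σ i = false → d i ≤ f (i+1))

/-- The underlying set of the poset `Γ`: pairs `(i, j)` with `i ∈ {n−1, n, n+1}`,
`1 ≤ j ≤ min i n`, representing `t_j^{(i)}`. -/
def GammaCond (n : ℕ) (q : ℕ × ℕ) : Prop :=
  (q.1 = n - 1 ∨ q.1 = n ∨ q.1 = n + 1) ∧ 1 ≤ q.2 ∧ q.2 ≤ min q.1 n

instance (n : ℕ) : DecidablePred (GammaCond n) := fun q => by unfold GammaCond; infer_instance

def Gamma (n : ℕ) := {q : ℕ × ℕ // GammaCond n q}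

instance (n : ℕ) : DecidableEq (Gamma n) := Subtype.instDecidableEq

/-- The partial order on `Γ`, generated by `t_j^{(i+1)} ≥ t_j^{(i)}` and
`t_j^{(i)} ≥ t_{j+1}^{(i+1)}`. -/
def GammaLE (n : ℕ) : Gamma n → Gamma n → Prop :=
  Relation.ReflTransGen (fun a b =>
    (b.1.1 = a.1.1 + 1 ∧ b.1.2 = a.1.2) ∨ (a.1.1 = b.1.1 + 1 ∧ a.1.2 = b.1.2 + 1))

/-- Order-decreasing subset (down-set) of `Γ`. -/
def IsDownSet (n : ℕ) (S : Set (Gamma n)) : Prop :=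
  ∀ x ∈ S, ∀ y, GammaLE n y x → y ∈ S

/-- `m_C(k) = #{c ∈ C : c ≤ k}` (1-based labels). -/
def mC (n : ℕ) (C : Finset (Fin (2*n))) (k : ℕ) : ℕ :=
  (C.filter (fun x : Fin (2*n) => (x : ℕ) + 1 ≤ k)).card

/-- `S_C = ∪_k {t_1^{(k)}, …, t_{m_C(k)}^{(k)}} ⊆ Γ`. -/
def SCset (n : ℕ) (C : Finset (Fin (2*n))) : Set (Gamma n) :=
  {q | q.1.2 ≤ mC n C q.1.1}

/-- The characteristic function `χ_{S_C} : Γ → ℕ`. -/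
def chiS (n : ℕ) (C : Finset (Fin (2*n))) : Gamma n → ℕ :=
  fun q => if q.1.2 ≤ mC n C q.1.1 then 1 else 0

/-- `p(Δ) = Σ_i χ_{S_{C_i}}`. -/
def pMap (n : ℕ) (l : List (Finset (Fin (2*n)))) : Gamma n → ℕ :=
  fun q => (l.map (fun C => chiS n C q)).sum

/-- The monoid `𝓟(Γ)` of order-preserving maps `Γ → ℤ_{≥0}`, as an additive submonoid of
`Γ → ℕ` under pointwise addition. -/
def PGamma (n : ℕ) : AddSubmonoid (Gamma n → ℕ) where
  carrier := {p | ∀ x y, GammaLE n x y → p x ≤ p y}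
  add_mem' := fun ha hb x y h => add_le_add (ha x y h) (hb x y h)
  zero_mem' := fun _ _ _ => Nat.zero_le _



lemma wtC_formula (n N m : ℕ) (C : Finset (Fin (2*n))) (g : Fin m → Fin (2*n))
    (hg : StrictMono g) (hC : C = Finset.image g Finset.univ) :
    wtC n N C = ∑ r : Fin m, ((g r : ℕ) + 1) * N ^ (n - ((r : ℕ) + 1)) := by
  have hcard : C.card = m := by
    rw [hC, Finset.card_image_of_injective _ hg.injective, Finset.card_univ, Fintype.card_fin]
  set g' : Fin C.card → Fin (2*n) := fun r => g (Fin.cast hcard r) with hg'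
  have hmono : StrictMono g' := fun a b h => hg h
  have hmem : ∀ r, g' r ∈ C := fun r => by
    rw [hC]; exact Finset.mem_image.2 ⟨_, Finset.mem_univ _, rfl⟩
  have key : g' = C.orderEmbOfFin rfl := Finset.orderEmbOfFin_unique rfl hmem hmono
  unfold wtC
  refine Fintype.sum_equiv (Fin.castOrderIso hcard).toEquiv _
    (fun r => ((g r : ℕ) + 1) * N ^ (n - ((r : ℕ) + 1))) (fun r => ?_)
  have h1 : ((C.orderIsoOfFin rfl r).1 : Fin (2*n)) = g' r := by rw [key]; rfl
  rw [h1]; rfl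

lemma wt_Iset (n N i : ℕ) (hn : 1 ≤ n) (hi : i ≤ n) :
    wtC n N (Iset n i) = ∑ r : Fin i, ((r:ℕ)+1) * N^(n-((r:ℕ)+1)) := by
  have := wtC_formula n N i (Iset n i) (fun r => ⟨r, by omega⟩)
    (fun a b h => h) ?_
  · exact this
  · ext x
    simp only [Iset, Finset.mem_filter, Finset.mem_univ, true_and, Finset.mem_image]
    constructor
    · intro h; exact ⟨⟨(x:ℕ), by omega⟩, by ext; rfl⟩
    · rintro ⟨a, rfl⟩; simp

lemma wt_Jset (n N j : ℕ) (hn : 1 ≤ n) (hj : j + 1 ≤ n) :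
    wtC n N (Jset n j) =
      (∑ r : Fin j, ((r:ℕ)+1) * N^(n-((r:ℕ)+1))) + n * N^(n-(j+1)) := by
  have key := wtC_formula n N (j+1) (Jset n j)
    (fun r => ⟨if (r:ℕ) < j then (r:ℕ) else n-1, by split <;> omega⟩)
    (fun a b h => by
      simp only [Fin.lt_def] at h ⊢
      have hb : (b:ℕ) ≤ j := by omega
      split <;> split <;> omega) ?_
  · rw [key, Fin.sum_univ_castSucc]
    congr 1
    · refine Finset.sum_congr rfl (fun r _ => ?_)
      show ((if (r:ℕ) < j then (r:ℕ) else n-1) + 1) * N ^ (n - ((r:ℕ)+1)) = _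
      rw [if_pos r.2]
    · show ((if j < j then j else n-1) + 1) * N ^ (n - (j+1)) = n * N ^ (n-(j+1))
      rw [if_neg (lt_irrefl j)]
      congr 1
      omega
  · ext x
    simp only [Jset, Finset.mem_filter, Finset.mem_univ, true_and, Finset.mem_image]
    constructor
    · intro h
      rcases h with h | h
      · exact ⟨⟨(x:ℕ), by omega⟩, by ext; simp; omega⟩
      · exact ⟨⟨j, by omega⟩, by ext; simp; omega⟩
    · rintro ⟨a, rfl⟩; simp; split <;> omega

lemma wt_JPset (n N j : ℕ) (hn : 1 ≤ n) (hj : j + 1 ≤ n) :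
    wtC n N (JPset n j) =
      (∑ r : Fin j, ((r:ℕ)+1) * N^(n-((r:ℕ)+1))) + (n+1) * N^(n-(j+1)) := by
  have key := wtC_formula n N (j+1) (JPset n j)
    (fun r => ⟨if (r:ℕ) < j then (r:ℕ) else n, by split <;> omega⟩)
    (fun a b h => by
      simp only [Fin.lt_def] at h ⊢
      have hb : (b:ℕ) ≤ j := by omega
      split <;> split <;> omega) ?_
  · rw [key, Fin.sum_univ_castSucc]
    congr 1
    · refine Finset.sum_congr rfl (fun r _ => ?_)
      show ((if (r:ℕ) < j then (r:ℕ) else n) + 1) * N ^ (n - ((r:ℕ)+1)) = _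
      rw [if_pos r.2]
    · show ((if j < j then j else n) + 1) * N ^ (n - (j+1)) = (n+1) * N ^ (n-(j+1))
      rw [if_neg (lt_irrefl j)]
  · ext x
    simp only [JPset, Finset.mem_filter, Finset.mem_univ, true_and, Finset.mem_image]
    constructor
    · intro h
      rcases h with h | h
      · exact ⟨⟨(x:ℕ), by omega⟩, by ext; simp; omega⟩
      · exact ⟨⟨j, by omega⟩, by ext; simp; omega⟩
    · rintro ⟨a, rfl⟩; simp; split <;> omega

lemma wt_Kset (n N k : ℕ) (hk : k + 2 ≤ n) :
    wtC n N (Kset n k) =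
      (∑ r : Fin k, ((r:ℕ)+1) * N^(n-((r:ℕ)+1))) + n * N^(n-(k+1)) + (n+1) * N^(n-(k+2)) := by
  have key := wtC_formula n N (k+2) (Kset n k)
    (fun r => ⟨if (r:ℕ) < k then (r:ℕ) else if (r:ℕ) = k then n-1 else n, by
      split
      · omega
      · split <;> omega⟩)
    (fun a b h => by
      simp only [Fin.lt_def] at h ⊢
      have hb : (b:ℕ) ≤ k+1 := by omega
      split <;> split <;> (try split) <;> (try split) <;> omega) ?_
  · rw [key, Fin.sum_univ_castSucc, Fin.sum_univ_castSucc]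
    congr 1
    · congr 1
      · refine Finset.sum_congr rfl (fun r _ => ?_)
        show ((if (r:ℕ) < k then (r:ℕ) else if (r:ℕ) = k then n-1 else n) + 1) *
          N ^ (n - ((r:ℕ)+1)) = _
        rw [if_pos r.2]
      · show ((if k < k then k else if k = k then n-1 else n) + 1) *
          N ^ (n - (k+1)) = n * N ^ (n-(k+1))
        rw [if_neg (lt_irrefl k), if_pos rfl]
        congr 1
        omega
    · show ((if k+1 < k then k+1 else if k+1 = k then n-1 else n) + 1) *
        N ^ (n - (k+2)) = (n+1) * N ^ (n-(k+2))
      rw [if_neg (by omega : ¬ k+1 < k), if_neg (by omega : ¬ k+1 = k)]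
  · ext x
    simp only [Kset, Finset.mem_filter, Finset.mem_univ, true_and, Finset.mem_image]
    constructor
    · intro h
      rcases h with h | h | h
      · exact ⟨⟨(x:ℕ), by omega⟩, by ext; simp; omega⟩
      · exact ⟨⟨k, by omega⟩, by ext; simp; omega⟩
      · exact ⟨⟨k+1, by omega⟩, by ext; simp; omega⟩
    · rintro ⟨a, rfl⟩; simp; split
      · omega
      · split <;> omega


/-- for `N > 2n`,
`wt(I_i) + wt(K_{i−1}) = wt(J′_i) + wt(J_{i−1})` and
`wt(I_i) + wt(K_{i−1}) < wt(J_i) + wt(J′_{i−1})` for `1 ≤ i ≤ n−1`. -/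
theorem statement10 (n : ℕ) (hn : 2 ≤ n) (N : ℕ) (hN : 2*n < N)
    (i : ℕ) (h1 : 1 ≤ i) (h2 : i ≤ n - 1) :
    wtC n N (Iset n i) + wtC n N (Kset n (i-1)) =
      wtC n N (JPset n i) + wtC n N (Jset n (i-1)) ∧
    wtC n N (Iset n i) + wtC n N (Kset n (i-1)) <
      wtC n N (Jset n i) + wtC n N (JPset n (i-1)) := by
  obtain ⟨j, rfl⟩ : ∃ j, i = j + 1 := ⟨i - 1, by omega⟩
  have hjn : j + 2 ≤ n := by omega
  have hs : j + 1 - 1 = j := by omega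
  rw [hs, wt_Iset n N (j+1) (by omega) (by omega),
    wt_Kset n N j hjn,
    wt_JPset n N (j+1) (by omega) hjn,
    wt_Jset n N j (by omega) (by omega),
    wt_Jset n N (j+1) (by omega) hjn,
    wt_JPset n N j (by omega) (by omega)]
  have hYX : N^(n-(j+2)) < N^(n-(j+1)) :=
    Nat.pow_lt_pow_right (by omega) (by omega)
  constructor
  · have h12 : j + 1 + 1 = j + 2 := rfl
    rw [h12]
    ring
  · have h12 : j + 1 + 1 = j + 2 := rfl
    rw [h12]
    nlinarith [hYX]


end SpBranch
end
end

section
/- For C ∈ 𝓛, let S_C ⊆ Γ be the union over k ∈ {n−1, n, n+1} of {t_1^{(k)}, …, t_{m_C(k)}^{(k)}}, where m_C(k) = #{c ∈ C : c ≤ k}. Then for every C ∈ 𝓛 the complement Γ ∖ S_C is an order-decreasing subset (down-set) of Γ, and the map C ↦ Γ ∖ S_C is an order isomorphism from (𝓛, ⪯) onto the set of proper order-decreasing subsets of Γ (down-sets not equal to Γ) ordered by inclusion; in particular C ⪯ C′ if and only if Γ ∖ S_C ⊆ Γ ∖ S_{C′}. -/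
noncomputable section

namespace SpBranch


/-! ### Auxiliary lemmas for Statement 11 -/

section Aux

open Finset

/-- Transfer counting over `Fin (2*n)` to counting over `range (2*n)`. -/
lemma count_range (n : ℕ) (p : ℕ → Prop) [DecidablePred p] :
    (Finset.univ.filter (fun x : Fin (2*n) => p ((x:ℕ)+1))).card
      = ((Finset.range (2*n)).filter (fun i => p (i+1))).card := by
  rw [Finset.card_filter, Fin.sum_univ_eq_sum_range (fun i => if p (i+1) then 1 else 0),
    ← Finset.card_filter]

lemma count_eq (n : ℕ) (p : ℕ → Prop) [DecidablePred p] (s : Finset ℕ)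
    (h : ∀ i, i < 2*n → (p (i+1) ↔ i ∈ s)) (hs : ∀ i ∈ s, i < 2*n) :
    (Finset.univ.filter (fun x : Fin (2*n) => p ((x:ℕ)+1))).card = s.card := by
  rw [count_range]
  congr 1
  ext i
  simp only [Finset.mem_filter, Finset.mem_range]
  constructor
  · rintro ⟨h1, h2⟩; exact (h i h1).mp h2
  · intro hi; exact ⟨hs i hi, (h i (hs i hi)).mpr hi⟩

lemma mC_Iset (n i k : ℕ) (hik : i ≤ k) (h2 : i ≤ 2*n) : mC n (Iset n i) k = i := by
  unfold mC Iset
  rw [Finset.filter_filter]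
  have := count_eq n (fun z => z ≤ i ∧ z ≤ k) (Finset.range i)
    (by intro j hj; simp only [Finset.mem_range]; omega)
    (by intro j hj; simp only [Finset.mem_range] at hj; omega)
  simpa using this

lemma mC_Jset_nm1 (n j : ℕ) (hn : 2 ≤ n) (hj : j ≤ n-1) : mC n (Jset n j) (n-1) = j := by
  unfold mC Jset
  rw [Finset.filter_filter]
  have := count_eq n (fun z => (z ≤ j ∨ z = n) ∧ z ≤ n-1) (Finset.range j)
    (by intro i hi; simp only [Finset.mem_range]; omega)
    (by intro i hi; simp only [Finset.mem_range] at hi; omega)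
  simpa using this

lemma mC_Jset_hi (n j k : ℕ) (hn : 2 ≤ n) (hj : j ≤ n-1) (hk : n ≤ k) :
    mC n (Jset n j) k = j + 1 := by
  unfold mC Jset
  rw [Finset.filter_filter]
  have := count_eq n (fun z => (z ≤ j ∨ z = n) ∧ z ≤ k) (insert (n-1) (Finset.range j))
    (by intro i hi; simp only [Finset.mem_insert, Finset.mem_range]; omega)
    (by intro i hi; simp only [Finset.mem_insert, Finset.mem_range] at hi; omega)
  rw [Finset.card_insert_of_notMem (by simp; omega), Finset.card_range] at this
  simpa using this

lemma mC_JPset_low (n j k : ℕ) (hn : 2 ≤ n) (hj : j ≤ n-1) (hk : n-1 ≤ k) (hk2 : k ≤ n) :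
    mC n (JPset n j) k = j := by
  unfold mC JPset
  rw [Finset.filter_filter]
  have := count_eq n (fun z => (z ≤ j ∨ z = n+1) ∧ z ≤ k) (Finset.range j)
    (by intro i hi; simp only [Finset.mem_range]; omega)
    (by intro i hi; simp only [Finset.mem_range] at hi; omega)
  simpa using this

lemma mC_JPset_np1 (n j : ℕ) (hn : 2 ≤ n) (hj : j ≤ n-1) :
    mC n (JPset n j) (n+1) = j + 1 := by
  unfold mC JPset
  rw [Finset.filter_filter]
  have := count_eq n (fun z => (z ≤ j ∨ z = n+1) ∧ z ≤ n+1) (insert n (Finset.range j))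
    (by intro i hi; simp only [Finset.mem_insert, Finset.mem_range]; omega)
    (by intro i hi; simp only [Finset.mem_insert, Finset.mem_range] at hi; omega)
  rw [Finset.card_insert_of_notMem (by simp; omega), Finset.card_range] at this
  simpa using this

lemma mC_Kset_nm1 (n k0 : ℕ) (hn : 2 ≤ n) (hk : k0 ≤ n-2) : mC n (Kset n k0) (n-1) = k0 := by
  unfold mC Kset
  rw [Finset.filter_filter]
  have := count_eq n (fun z => (z ≤ k0 ∨ z = n ∨ z = n+1) ∧ z ≤ n-1) (Finset.range k0)
    (by intro i hi; simp only [Finset.mem_range]; omega)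
    (by intro i hi; simp only [Finset.mem_range] at hi; omega)
  simpa using this

lemma mC_Kset_n (n k0 : ℕ) (hn : 2 ≤ n) (hk : k0 ≤ n-2) : mC n (Kset n k0) n = k0 + 1 := by
  unfold mC Kset
  rw [Finset.filter_filter]
  have := count_eq n (fun z => (z ≤ k0 ∨ z = n ∨ z = n+1) ∧ z ≤ n) (insert (n-1) (Finset.range k0))
    (by intro i hi; simp only [Finset.mem_insert, Finset.mem_range]; omega)
    (by intro i hi; simp only [Finset.mem_insert, Finset.mem_range] at hi; omega)
  rw [Finset.card_insert_of_notMem (by simp; omega), Finset.card_range] at this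
  simpa using this

lemma mC_Kset_np1 (n k0 : ℕ) (hn : 2 ≤ n) (hk : k0 ≤ n-2) : mC n (Kset n k0) (n+1) = k0 + 2 := by
  unfold mC Kset
  rw [Finset.filter_filter]
  have := count_eq n (fun z => (z ≤ k0 ∨ z = n ∨ z = n+1) ∧ z ≤ n+1)
    (insert (n-1) (insert n (Finset.range k0)))
    (by intro i hi; simp only [Finset.mem_insert, Finset.mem_range]; omega)
    (by intro i hi; simp only [Finset.mem_insert, Finset.mem_range] at hi; omega)
  rw [Finset.card_insert_of_notMem (by simp; omega),
    Finset.card_insert_of_notMem (by simp; omega), Finset.card_range] at this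
  simpa using this

/-- The full structure of elements of `𝓛`, with the values of `m_C` at the three levels. -/
lemma shape {n : ℕ} (hn : 2 ≤ n) {C : Finset (Fin (2*n))} (hC : C ∈ LSet n) :
    ∃ a, (1 ≤ a ∧ a ≤ n-1 ∧ C = Iset n a ∧
            mC n C (n-1) = a ∧ mC n C n = a ∧ mC n C (n+1) = a)
      ∨ (a ≤ n-1 ∧ C = Jset n a ∧
            mC n C (n-1) = a ∧ mC n C n = a+1 ∧ mC n C (n+1) = a+1)
      ∨ (a ≤ n-1 ∧ C = JPset n a ∧
            mC n C (n-1) = a ∧ mC n C n = a ∧ mC n C (n+1) = a+1)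
      ∨ (a ≤ n-2 ∧ C = Kset n a ∧
            mC n C (n-1) = a ∧ mC n C n = a+1 ∧ mC n C (n+1) = a+2) := by
  rcases hC with ⟨i, h1, h2, rfl⟩ | ⟨j, h1, rfl⟩ | ⟨j, h1, rfl⟩ | ⟨k, h1, rfl⟩
  · exact ⟨i, Or.inl ⟨h1, h2, rfl,
      mC_Iset n i (n-1) (by omega) (by omega),
      mC_Iset n i n (by omega) (by omega),
      mC_Iset n i (n+1) (by omega) (by omega)⟩⟩
  · exact ⟨j, Or.inr (Or.inl ⟨h1, rfl,
      mC_Jset_nm1 n j hn h1,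
      mC_Jset_hi n j n hn h1 le_rfl,
      mC_Jset_hi n j (n+1) hn h1 (by omega)⟩)⟩
  · exact ⟨j, Or.inr (Or.inr (Or.inl ⟨h1, rfl,
      mC_JPset_low n j (n-1) hn h1 le_rfl (by omega),
      mC_JPset_low n j n hn h1 (by omega) le_rfl,
      mC_JPset_np1 n j hn h1⟩))⟩
  · exact ⟨k, Or.inr (Or.inr (Or.inr ⟨h1, rfl,
      mC_Kset_nm1 n k hn h1, mC_Kset_n n k hn h1, mC_Kset_np1 n k hn h1⟩))⟩

/-- Numeric-only version of `shape`. -/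
lemma shapeN {n : ℕ} (hn : 2 ≤ n) {C : Finset (Fin (2*n))} (hC : C ∈ LSet n) :
    ∃ a, (1 ≤ a ∧ a ≤ n-1 ∧ mC n C (n-1) = a ∧ mC n C n = a ∧ mC n C (n+1) = a)
      ∨ (a ≤ n-1 ∧ mC n C (n-1) = a ∧ mC n C n = a+1 ∧ mC n C (n+1) = a+1)
      ∨ (a ≤ n-1 ∧ mC n C (n-1) = a ∧ mC n C n = a ∧ mC n C (n+1) = a+1)
      ∨ (a ≤ n-2 ∧ mC n C (n-1) = a ∧ mC n C n = a+1 ∧ mC n C (n+1) = a+2) := by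
  obtain ⟨a, h⟩ := shape hn hC
  exact ⟨a, by tauto⟩

lemma mC_mono (n : ℕ) (C : Finset (Fin (2*n))) {k k' : ℕ} (h : k ≤ k') :
    mC n C k ≤ mC n C k' := by
  apply Finset.card_le_card
  intro x hx
  rw [Finset.mem_filter] at *
  exact ⟨hx.1, le_trans hx.2 h⟩

lemma mC_succ (n : ℕ) (C : Finset (Fin (2*n))) (k : ℕ) :
    mC n C (k+1) ≤ mC n C k + 1 := by
  have hsub : C.filter (fun x : Fin (2*n) => (x:ℕ)+1 ≤ k+1) ⊆
      (C.filter fun x : Fin (2*n) => (x:ℕ)+1 ≤ k) ∪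
      (C.filter fun x : Fin (2*n) => (x:ℕ)+1 = k+1) := by
    intro x
    simp only [Finset.mem_filter, Finset.mem_union]
    intro ⟨h1, h2⟩
    by_cases hc : (x:ℕ)+1 ≤ k
    · exact Or.inl ⟨h1, hc⟩
    · exact Or.inr ⟨h1, by omega⟩
  have h1 : (C.filter fun x : Fin (2*n) => (x:ℕ)+1 = k+1).card ≤ 1 := by
    apply Finset.card_le_one.mpr
    intro a ha b hb
    rw [Finset.mem_filter] at ha hb
    exact Fin.ext (by omega)
  calc mC n C (k+1) ≤ _ := Finset.card_le_card hsub
    _ ≤ _ := Finset.card_union_le _ _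
    _ ≤ mC n C k + 1 := by exact Nat.add_le_add_left h1 _

lemma SCset_upclosed {n : ℕ} {C : Finset (Fin (2*n))} {y x : Gamma n}
    (h : GammaLE n y x) (hy : y ∈ SCset n C) : x ∈ SCset n C := by
  induction h with
  | refl => exact hy
  | tail _ r ih =>
    rename_i b c _
    simp only [SCset, Set.mem_setOf_eq] at ih ⊢
    rcases r with ⟨e1, e2⟩ | ⟨e1, e2⟩
    · rw [e1, e2]
      exact le_trans ih (mC_mono n C (Nat.le_succ _))
    · have h1 : mC n C (c.1.1+1) ≤ mC n C c.1.1 + 1 := mC_succ n C c.1.1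
      rw [e1, e2] at ih
      omega

lemma isDownSet_compl (n : ℕ) (C : Finset (Fin (2*n))) :
    IsDownSet n ((SCset n C)ᶜ) := by
  intro x hx y hyx
  simp only [Set.mem_compl_iff] at hx ⊢
  intro hy
  exact hx (SCset_upclosed hyx hy)

end Aux
section Aux2

/-- Single step within a level of `Γ`. -/
lemma level_step {n : ℕ} (hn : 2 ≤ n) {k j : ℕ} (hk : k = n-1 ∨ k = n ∨ k = n+1)
    (h1 : 1 ≤ j) (hj : j + 1 ≤ min k n)
    (hq' : GammaCond n (k, j+1)) (hq : GammaCond n (k, j)) :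
    GammaLE n ⟨(k, j+1), hq'⟩ ⟨(k, j), hq⟩ := by
  rcases hk with hk | hk | hk
  · have hmid : GammaCond n (n, j+1) := ⟨Or.inr (Or.inl rfl), by omega, by omega⟩
    exact Relation.ReflTransGen.head (b := ⟨(n, j+1), hmid⟩)
      (Or.inl ⟨show n = k + 1 by omega, rfl⟩)
      (Relation.ReflTransGen.single (Or.inr ⟨show n = k + 1 by omega, rfl⟩))
  · have hmid : GammaCond n (n-1, j) := ⟨Or.inl rfl, by omega, by omega⟩
    exact Relation.ReflTransGen.head (b := ⟨(n-1, j), hmid⟩)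
      (Or.inr ⟨show k = (n-1) + 1 by omega, rfl⟩)
      (Relation.ReflTransGen.single (Or.inl ⟨show k = (n-1) + 1 by omega, rfl⟩))
  · have hmid : GammaCond n (n, j) := ⟨Or.inr (Or.inl rfl), by omega, by omega⟩
    exact Relation.ReflTransGen.head (b := ⟨(n, j), hmid⟩)
      (Or.inr ⟨show k = n + 1 by omega, rfl⟩)
      (Relation.ReflTransGen.single (Or.inl ⟨show k = n + 1 by omega, rfl⟩))

lemma level_le_aux {n : ℕ} (hn : 2 ≤ n) :
    ∀ d k j, (k = n-1 ∨ k = n ∨ k = n+1) → 1 ≤ j → j + d ≤ min k n →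
      ∀ (hq' : GammaCond n (k, j+d)) (hq : GammaCond n (k, j)),
        GammaLE n ⟨(k, j+d), hq'⟩ ⟨(k, j), hq⟩ := by
  intro d
  induction d with
  | zero => intro k j hk h1 hj hq' hq; exact Relation.ReflTransGen.refl
  | succ d ih =>
    intro k j hk h1 hj hq' hq
    have hqd : GammaCond n (k, j+d) := ⟨hq.1, by omega, by omega⟩
    exact Relation.ReflTransGen.trans
      (level_step (j := j + d) hn hk (by omega) (by omega) hq' hqd)
      (ih k j hk h1 (by omega) hqd hq)

/-- Within each level of `Γ`, larger second index is smaller. -/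
lemma level_le {n : ℕ} (hn : 2 ≤ n) {k j j' : ℕ} (hk : k = n-1 ∨ k = n ∨ k = n+1)
    (h1 : 1 ≤ j) (hjj : j ≤ j') (hj' : j' ≤ min k n)
    (hq' : GammaCond n (k, j')) (hq : GammaCond n (k, j)) :
    GammaLE n ⟨(k, j'), hq'⟩ ⟨(k, j), hq⟩ := by
  obtain ⟨d, rfl⟩ : ∃ d, j' = j + d := ⟨j' - j, by omega⟩
  exact level_le_aux hn d k j hk h1 hj' hq' hq

/-- Componentwise inequalities imply inclusion of the `S_C` sets. -/
lemma subset_of_comp {n : ℕ} {C C' : Finset (Fin (2*n))}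
    (h1 : mC n C' (n-1) ≤ mC n C (n-1)) (h2 : mC n C' n ≤ mC n C n)
    (h3 : mC n C' (n+1) ≤ mC n C (n+1)) :
    SCset n C' ⊆ SCset n C := by
  intro q hq
  simp only [SCset, Set.mem_setOf_eq] at hq ⊢
  rcases q.2.1 with e | e | e <;> rw [e] at hq ⊢ <;> omega

/-- Inclusion of the `S_C` sets implies componentwise inequalities. -/
lemma comp_of_subset {n : ℕ} (hn : 2 ≤ n) {C C' : Finset (Fin (2*n))}
    (hC' : C' ∈ LSet n) (h : SCset n C' ⊆ SCset n C) :
    mC n C' (n-1) ≤ mC n C (n-1) ∧ mC n C' n ≤ mC n C n ∧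
      mC n C' (n+1) ≤ mC n C (n+1) := by
  obtain ⟨a, hs⟩ := shapeN hn hC'
  have key : ∀ k, (k = n-1 ∨ k = n ∨ k = n+1) → 1 ≤ mC n C' k → mC n C' k ≤ min k n →
      mC n C' k ≤ mC n C k := by
    intro k hk hpos hbd
    have hq : GammaCond n (k, mC n C' k) := ⟨hk, hpos, hbd⟩
    have hmem : (⟨(k, mC n C' k), hq⟩ : Gamma n) ∈ SCset n C' := by
      show mC n C' k ≤ mC n C' k
      exact le_rfl
    exact h hmem
  refine ⟨?_, ?_, ?_⟩
  · rcases Nat.eq_zero_or_pos (mC n C' (n-1)) with h0 | h0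
    · omega
    · exact key (n-1) (Or.inl rfl) h0 (by omega)
  · rcases Nat.eq_zero_or_pos (mC n C' n) with h0 | h0
    · omega
    · exact key n (Or.inr (Or.inl rfl)) h0 (by omega)
  · rcases Nat.eq_zero_or_pos (mC n C' (n+1)) with h0 | h0
    · omega
    · exact key (n+1) (Or.inr (Or.inr rfl)) h0 (by omega)

/-- Elements of `𝓛` are determined by the values of `m_C` at the three levels. -/
lemma inj_comp {n : ℕ} (hn : 2 ≤ n) {C C' : Finset (Fin (2*n))}
    (hC : C ∈ LSet n) (hC' : C' ∈ LSet n)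
    (e1 : mC n C (n-1) = mC n C' (n-1)) (e2 : mC n C n = mC n C' n)
    (e3 : mC n C (n+1) = mC n C' (n+1)) : C = C' := by
  obtain ⟨a, hs⟩ := shape hn hC
  obtain ⟨a', hs'⟩ := shape hn hC'
  clear hC hC'
  rcases hs with ⟨_,_,he,v1,v2,v3⟩|⟨_,he,v1,v2,v3⟩|⟨_,he,v1,v2,v3⟩|⟨_,he,v1,v2,v3⟩ <;>
    rcases hs' with ⟨_,_,he',w1,w2,w3⟩|⟨_,he',w1,w2,w3⟩|⟨_,he',w1,w2,w3⟩|⟨_,he',w1,w2,w3⟩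
  all_goals rw [he, he']
  all_goals (first
    | omega
    | (have haa : a = a' := by omega
       rw [haa]))

set_option maxHeartbeats 1000000 in
/-- Generators of the order on `𝓛` decrease `m_C` componentwise. -/
lemma LGen_comp {n : ℕ} (hn : 2 ≤ n) {C C' : Finset (Fin (2*n))} (h : LGen n C C') :
    C' ∈ LSet n ∧ mC n C' (n-1) ≤ mC n C (n-1) ∧ mC n C' n ≤ mC n C n ∧
      mC n C' (n+1) ≤ mC n C (n+1) ∧
      mC n C' (n-1) + mC n C' n + mC n C' (n+1) + 1
        = mC n C (n-1) + mC n C n + mC n C (n+1) := by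
  obtain ⟨i, hi1, hi2, hc⟩ := h
  have him : i - 1 ≤ n - 1 := by omega
  have hik : i - 1 ≤ n - 2 := by omega
  rcases hc with ⟨rfl, rfl⟩ | ⟨rfl, rfl⟩ | ⟨rfl, rfl⟩ | ⟨rfl, rfl⟩ | ⟨rfl, rfl⟩ | ⟨rfl, rfl⟩
  · have A1 := mC_Jset_nm1 n i hn hi2
    have A2 := mC_Jset_hi n i n hn hi2 le_rfl
    have A3 := mC_Jset_hi n i (n+1) hn hi2 (by omega)
    have B1 := mC_JPset_low n i (n-1) hn hi2 le_rfl (by omega)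
    have B2 := mC_JPset_low n i n hn hi2 (by omega) le_rfl
    have B3 := mC_JPset_np1 n i hn hi2
    refine ⟨Or.inr (Or.inr (Or.inl ⟨i, hi2, rfl⟩)), ?_, ?_, ?_, ?_⟩ <;>
      (simp only [A1, A2, A3, B1, B2, B3]; omega)
  · have A1 := mC_JPset_low n i (n-1) hn hi2 le_rfl (by omega)
    have A2 := mC_JPset_low n i n hn hi2 (by omega) le_rfl
    have A3 := mC_JPset_np1 n i hn hi2
    have B1 := mC_Iset n i (n-1) (by omega) (by omega)
    have B2 := mC_Iset n i n (by omega) (by omega)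
    have B3 := mC_Iset n i (n+1) (by omega) (by omega)
    refine ⟨Or.inl ⟨i, hi1, hi2, rfl⟩, ?_, ?_, ?_, ?_⟩ <;>
      (simp only [A1, A2, A3, B1, B2, B3]; omega)
  · have A1 := mC_JPset_low n i (n-1) hn hi2 le_rfl (by omega)
    have A2 := mC_JPset_low n i n hn hi2 (by omega) le_rfl
    have A3 := mC_JPset_np1 n i hn hi2
    have B1 := mC_Kset_nm1 n (i-1) hn hik
    have B2 := mC_Kset_n n (i-1) hn hik
    have B3 := mC_Kset_np1 n (i-1) hn hik
    refine ⟨Or.inr (Or.inr (Or.inr ⟨i-1, hik, rfl⟩)), ?_, ?_, ?_, ?_⟩ <;>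
      (simp only [A1, A2, A3, B1, B2, B3]; omega)
  · have A1 := mC_Iset n i (n-1) (by omega) (by omega)
    have A2 := mC_Iset n i n (by omega) (by omega)
    have A3 := mC_Iset n i (n+1) (by omega) (by omega)
    have B1 := mC_Jset_nm1 n (i-1) hn him
    have B2 := mC_Jset_hi n (i-1) n hn him le_rfl
    have B3 := mC_Jset_hi n (i-1) (n+1) hn him (by omega)
    refine ⟨Or.inr (Or.inl ⟨i-1, him, rfl⟩), ?_, ?_, ?_, ?_⟩ <;>
      (simp only [A1, A2, A3, B1, B2, B3]; omega)
  · have A1 := mC_Kset_nm1 n (i-1) hn hik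
    have A2 := mC_Kset_n n (i-1) hn hik
    have A3 := mC_Kset_np1 n (i-1) hn hik
    have B1 := mC_Jset_nm1 n (i-1) hn him
    have B2 := mC_Jset_hi n (i-1) n hn him le_rfl
    have B3 := mC_Jset_hi n (i-1) (n+1) hn him (by omega)
    refine ⟨Or.inr (Or.inl ⟨i-1, him, rfl⟩), ?_, ?_, ?_, ?_⟩ <;>
      (simp only [A1, A2, A3, B1, B2, B3]; omega)
  · have A1 := mC_Jset_nm1 n (i-1) hn him
    have A2 := mC_Jset_hi n (i-1) n hn him le_rfl
    have A3 := mC_Jset_hi n (i-1) (n+1) hn him (by omega)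
    have B1 := mC_JPset_low n (i-1) (n-1) hn him le_rfl (by omega)
    have B2 := mC_JPset_low n (i-1) n hn him (by omega) le_rfl
    have B3 := mC_JPset_np1 n (i-1) hn him
    refine ⟨Or.inr (Or.inr (Or.inl ⟨i-1, him, rfl⟩)), ?_, ?_, ?_, ?_⟩ <;>
      (simp only [A1, A2, A3, B1, B2, B3]; omega)

lemma LLE_comp {n : ℕ} (hn : 2 ≤ n) {C C' : Finset (Fin (2*n))}
    (hC : C ∈ LSet n) (h : LLE n C C') :
    C' ∈ LSet n ∧ mC n C' (n-1) ≤ mC n C (n-1) ∧ mC n C' n ≤ mC n C n ∧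
      mC n C' (n+1) ≤ mC n C (n+1) := by
  induction h with
  | refl => exact ⟨hC, le_rfl, le_rfl, le_rfl⟩
  | tail _ r ih =>
    obtain ⟨hm, u1, u2, u3, _⟩ := LGen_comp hn r
    exact ⟨hm, le_trans u1 ih.2.1, le_trans u2 ih.2.2.1, le_trans u3 ih.2.2.2⟩

end Aux2
section Aux3

set_option maxHeartbeats 1000000 in
/-- One step down in `𝓛` staying above a given lower bound. -/
lemma exists_step {n : ℕ} (hn : 2 ≤ n) {C C' : Finset (Fin (2*n))}
    (hC : C ∈ LSet n) (hC' : C' ∈ LSet n)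
    (h1 : mC n C' (n-1) ≤ mC n C (n-1)) (h2 : mC n C' n ≤ mC n C n)
    (h3 : mC n C' (n+1) ≤ mC n C (n+1))
    (hne : ¬ (mC n C' (n-1) = mC n C (n-1) ∧ mC n C' n = mC n C n ∧
      mC n C' (n+1) = mC n C (n+1))) :
    ∃ C'', LGen n C C'' ∧ C'' ∈ LSet n ∧
      mC n C' (n-1) ≤ mC n C'' (n-1) ∧ mC n C' n ≤ mC n C'' n ∧
      mC n C' (n+1) ≤ mC n C'' (n+1) ∧
      mC n C'' (n-1) + mC n C'' n + mC n C'' (n+1)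
        < mC n C (n-1) + mC n C n + mC n C (n+1) := by
  obtain ⟨t, ht⟩ := shapeN hn hC'
  obtain ⟨a, hs⟩ := shape hn hC
  rcases hs with ⟨ha1, ha2, hCe, v1, v2, v3⟩ | ⟨ha2, hCe, v1, v2, v3⟩ |
    ⟨ha2, hCe, v1, v2, v3⟩ | ⟨ha2, hCe, v1, v2, v3⟩
  · -- C = Iset n a, C'' = Jset n (a-1)
    have B1 := mC_Jset_nm1 n (a-1) hn (by omega)
    have B2 := mC_Jset_hi n (a-1) n hn (by omega) le_rfl
    have B3 := mC_Jset_hi n (a-1) (n+1) hn (by omega) (by omega)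
    refine ⟨Jset n (a-1), ⟨a, ha1, ha2, Or.inr (Or.inr (Or.inr (Or.inl ⟨hCe, rfl⟩)))⟩,
      Or.inr (Or.inl ⟨a-1, by omega, rfl⟩), ?_, ?_, ?_, ?_⟩ <;>
      (simp only [B1, B2, B3]; omega)
  · -- C = Jset n a, C'' = JPset n a
    have hgen : LGen n C (JPset n a) := by
      rcases Nat.eq_zero_or_pos a with rfl | hpos
      · exact ⟨1, le_rfl, by omega, Or.inr (Or.inr (Or.inr (Or.inr (Or.inr ⟨hCe, rfl⟩))))⟩
      · exact ⟨a, hpos, ha2, Or.inl ⟨hCe, rfl⟩⟩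
    have B1 := mC_JPset_low n a (n-1) hn ha2 le_rfl (by omega)
    have B2 := mC_JPset_low n a n hn ha2 (by omega) le_rfl
    have B3 := mC_JPset_np1 n a hn ha2
    refine ⟨JPset n a, hgen, Or.inr (Or.inr (Or.inl ⟨a, ha2, rfl⟩)), ?_, ?_, ?_, ?_⟩ <;>
      (simp only [B1, B2, B3]; omega)
  · -- C = JPset n a
    rcases Nat.eq_zero_or_pos a with rfl | hpos
    · exfalso; omega
    by_cases hc3 : mC n C' (n+1) ≤ a
    · -- C'' = Iset n a
      have B1 := mC_Iset n a (n-1) (by omega) (by omega)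
      have B2 := mC_Iset n a n (by omega) (by omega)
      have B3 := mC_Iset n a (n+1) (by omega) (by omega)
      refine ⟨Iset n a, ⟨a, hpos, ha2, Or.inr (Or.inl ⟨hCe, rfl⟩)⟩,
        Or.inl ⟨a, hpos, ha2, rfl⟩, ?_, ?_, ?_, ?_⟩ <;>
        (simp only [B1, B2, B3]; omega)
    · -- C'' = Kset n (a-1)
      have B1 := mC_Kset_nm1 n (a-1) hn (by omega)
      have B2 := mC_Kset_n n (a-1) hn (by omega)
      have B3 := mC_Kset_np1 n (a-1) hn (by omega)
      refine ⟨Kset n (a-1), ⟨a, hpos, ha2, Or.inr (Or.inr (Or.inl ⟨hCe, rfl⟩))⟩,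
        Or.inr (Or.inr (Or.inr ⟨a-1, by omega, rfl⟩)), ?_, ?_, ?_, ?_⟩ <;>
        (simp only [B1, B2, B3]; omega)
  · -- C = Kset n a, C'' = Jset n a
    have B1 := mC_Jset_nm1 n a hn (by omega)
    have B2 := mC_Jset_hi n a n hn (by omega) le_rfl
    have B3 := mC_Jset_hi n a (n+1) hn (by omega) (by omega)
    refine ⟨Jset n a, ⟨a+1, by omega, by omega, Or.inr (Or.inr (Or.inr (Or.inr (Or.inl
      ⟨hCe, rfl⟩))))⟩, Or.inr (Or.inl ⟨a, by omega, rfl⟩), ?_, ?_, ?_, ?_⟩ <;>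
      (simp only [B1, B2, B3]; omega)

/-- Componentwise inequalities imply the order on `𝓛`. -/
lemma LLE_of_comp {n : ℕ} (hn : 2 ≤ n) :
    ∀ s (C C' : Finset (Fin (2*n))), C ∈ LSet n → C' ∈ LSet n →
      mC n C (n-1) + mC n C n + mC n C (n+1) ≤ s →
      mC n C' (n-1) ≤ mC n C (n-1) → mC n C' n ≤ mC n C n →
      mC n C' (n+1) ≤ mC n C (n+1) → LLE n C C' := by
  intro s
  induction s with
  | zero =>
    intro C C' hC hC' hs u1 u2 u3
    obtain ⟨t, ht⟩ := shapeN hn hC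
    exfalso; omega
  | succ s ih =>
    intro C C' hC hC' hs u1 u2 u3
    by_cases he : mC n C' (n-1) = mC n C (n-1) ∧ mC n C' n = mC n C n ∧
        mC n C' (n+1) = mC n C (n+1)
    · have hCC : C = C' := inj_comp hn hC hC' he.1.symm he.2.1.symm he.2.2.symm
      rw [hCC]
      exact Relation.ReflTransGen.refl
    · obtain ⟨C'', hgen, hmem, w1, w2, w3, hsum⟩ := exists_step hn hC hC' u1 u2 u3 he
      obtain ⟨-, z1, z2, z3, -⟩ := LGen_comp hn hgen
      exact Relation.ReflTransGen.head hgen (ih C'' C' hmem hC' (by omega) w1 w2 w3)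

lemma mC_np1_pos {n : ℕ} (hn : 2 ≤ n) {C : Finset (Fin (2*n))} (hC : C ∈ LSet n) :
    1 ≤ mC n C (n+1) := by
  obtain ⟨t, ht⟩ := shapeN hn hC
  omega

lemma compl_ne_univ {n : ℕ} (hn : 2 ≤ n) {C : Finset (Fin (2*n))} (hC : C ∈ LSet n) :
    (SCset n C)ᶜ ≠ Set.univ := by
  intro h
  have hq : GammaCond n (n+1, 1) := ⟨Or.inr (Or.inr rfl), le_rfl, by omega⟩
  have hmem : (⟨(n+1, 1), hq⟩ : Gamma n) ∈ SCset n C := by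
    show 1 ≤ mC n C (n+1)
    exact mC_np1_pos hn hC
  have : (⟨(n+1, 1), hq⟩ : Gamma n) ∈ (SCset n C)ᶜ := h ▸ Set.mem_univ _
  exact this hmem

end Aux3
section Aux4

open Classical in
/-- Surjectivity: every proper down-set of `Γ` is the complement of some `S_C`, `C ∈ 𝓛`. -/
lemma surj_aux {n : ℕ} (hn : 2 ≤ n) {S : Set (Gamma n)} (hDS : IsDownSet n S)
    (hne : S ≠ Set.univ) : ∃ C ∈ LSet n, (SCset n C)ᶜ = S := by
  have hU : ∀ x y : Gamma n, GammaLE n x y → x ∉ S → y ∉ S :=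
    fun x y h hx hy => hx (hDS y hy x h)
  let P : ℕ → ℕ → Prop := fun k j => ∃ h : GammaCond n (k, j), (⟨(k, j), h⟩ : Gamma n) ∉ S
  let m : ℕ → ℕ := fun k => Nat.findGreatest (P k) n
  have Pbound : ∀ k j, P k j → 1 ≤ j ∧ j ≤ min k n := fun k j hp => ⟨hp.1.2.1, hp.1.2.2⟩
  have mle : ∀ k j, P k j → j ≤ m k := fun k j hp =>
    Nat.le_findGreatest (le_trans (Pbound k j hp).2 (min_le_right _ _)) hp
  have mspec : ∀ k, 1 ≤ m k → P k (m k) := by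
    intro k hk
    obtain ⟨j, _, hj, hp⟩ := Nat.findGreatest_pos.mp hk
    exact Nat.findGreatest_spec hj hp
  have mbd : ∀ k, 1 ≤ m k → m k ≤ min k n := fun k hk => (Pbound k _ (mspec k hk)).2
  -- membership characterization
  have key : ∀ q : Gamma n, (q ∉ S ↔ q.1.2 ≤ m q.1.1) := by
    intro q
    constructor
    · intro hqS
      exact mle q.1.1 q.1.2 ⟨q.2, hqS⟩
    · intro hj
      have h1 : 1 ≤ q.1.2 := q.2.2.1
      have hpos : 1 ≤ m q.1.1 := le_trans h1 hj
      obtain ⟨hc, hns⟩ := mspec q.1.1 hpos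
      have hle : GammaLE n ⟨(q.1.1, m q.1.1), hc⟩ ⟨(q.1.1, q.1.2), q.2⟩ :=
        level_le hn q.2.1 h1 hj hc.2.2 hc q.2
      exact hU _ _ hle hns
  -- inequalities between the levels
  have hab : m (n-1) ≤ m n := by
    rcases Nat.eq_zero_or_pos (m (n-1)) with h0 | h0
    · omega
    · obtain ⟨hc1, hns⟩ := mspec _ h0
      have hc2 : GammaCond n (n, m (n-1)) :=
        ⟨Or.inr (Or.inl rfl), hc1.2.1, by have := hc1.2.2; omega⟩
      have hstep : GammaLE n ⟨(n-1, m (n-1)), hc1⟩ ⟨(n, m (n-1)), hc2⟩ :=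
        Relation.ReflTransGen.single (Or.inl ⟨show n = (n-1)+1 by omega, rfl⟩)
      exact mle _ _ ⟨hc2, hU _ _ hstep hns⟩
  have hbc : m n ≤ m (n+1) := by
    rcases Nat.eq_zero_or_pos (m n) with h0 | h0
    · omega
    · obtain ⟨hc1, hns⟩ := mspec _ h0
      have hc2 : GammaCond n (n+1, m n) :=
        ⟨Or.inr (Or.inr rfl), hc1.2.1, by have := hc1.2.2; omega⟩
      have hstep : GammaLE n ⟨(n, m n), hc1⟩ ⟨(n+1, m n), hc2⟩ :=
        Relation.ReflTransGen.single (Or.inl ⟨rfl, rfl⟩)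
      exact mle _ _ ⟨hc2, hU _ _ hstep hns⟩
  have hba : m n ≤ m (n-1) + 1 := by
    rcases Nat.lt_or_ge (m n) 2 with h0 | h0
    · omega
    · obtain ⟨hc1, hns⟩ := mspec n (by omega)
      have hc2 : GammaCond n (n-1, m n - 1) :=
        ⟨Or.inl rfl, by omega, by have := hc1.2.2; omega⟩
      have hstep : GammaLE n ⟨(n, m n), hc1⟩ ⟨(n-1, m n - 1), hc2⟩ :=
        Relation.ReflTransGen.single
          (Or.inr ⟨show n = (n-1)+1 by omega, show m n = (m n - 1) + 1 by omega⟩)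
      have := mle _ _ ⟨hc2, hU _ _ hstep hns⟩
      omega
  have hcb : m (n+1) ≤ m n + 1 := by
    rcases Nat.lt_or_ge (m (n+1)) 2 with h0 | h0
    · omega
    · obtain ⟨hc1, hns⟩ := mspec (n+1) (by omega)
      have hc2 : GammaCond n (n, m (n+1) - 1) :=
        ⟨Or.inr (Or.inl rfl), by omega, by have := hc1.2.2; omega⟩
      have hstep : GammaLE n ⟨(n+1, m (n+1)), hc1⟩ ⟨(n, m (n+1) - 1), hc2⟩ :=
        Relation.ReflTransGen.single
          (Or.inr ⟨rfl, show m (n+1) = (m (n+1) - 1) + 1 by omega⟩)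
      have := mle _ _ ⟨hc2, hU _ _ hstep hns⟩
      omega
  have hc1' : 1 ≤ m (n+1) := by
    obtain ⟨q, hq⟩ := (Set.ne_univ_iff_exists_notMem S).mp hne
    have h1 : 1 ≤ q.1.2 := q.2.2.1
    have hbq : q.1.2 ≤ min q.1.1 n := q.2.2.2
    suffices h : P (n+1) q.1.2 by
      have := mle _ _ h; omega
    have hc3 : GammaCond n (n+1, q.1.2) := ⟨Or.inr (Or.inr rfl), h1, by omega⟩
    rcases q.2.1 with e | e | e
    · have c2 : GammaCond n (n, q.1.2) := ⟨Or.inr (Or.inl rfl), h1, by omega⟩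
      have s1 : GammaLE n q ⟨(n, q.1.2), c2⟩ :=
        Relation.ReflTransGen.single (Or.inl ⟨show n = q.1.1 + 1 by omega, rfl⟩)
      have s2 : GammaLE n (⟨(n, q.1.2), c2⟩ : Gamma n) ⟨(n+1, q.1.2), hc3⟩ :=
        Relation.ReflTransGen.single (Or.inl ⟨rfl, rfl⟩)
      exact ⟨hc3, hU _ _ (s1.trans s2) hq⟩
    · have s1 : GammaLE n q ⟨(n+1, q.1.2), hc3⟩ :=
        Relation.ReflTransGen.single (Or.inl ⟨show n+1 = q.1.1 + 1 by omega, rfl⟩)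
      exact ⟨hc3, hU _ _ s1 hq⟩
    · have hq1 : q.1 = ((n+1 : ℕ), q.1.2) := by
        rcases q with ⟨⟨k, j⟩, hkj⟩
        simpa using e
      have heq : (⟨((n+1 : ℕ), q.1.2), hc3⟩ : Gamma n) = q := Subtype.ext hq1.symm
      exact ⟨hc3, by rw [heq]; exact hq⟩
  have ha_bd : m (n-1) ≤ n - 1 := by
    rcases Nat.eq_zero_or_pos (m (n-1)) with h0 | h0
    · omega
    · have := mbd (n-1) h0; omega
  have hb_bd : m n ≤ n := by
    rcases Nat.eq_zero_or_pos (m n) with h0 | h0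
    · omega
    · have := mbd n h0; omega
  have hc_bd : m (n+1) ≤ n := by
    have := mbd (n+1) hc1'; omega
  -- generic finisher
  have finish : ∀ C : Finset (Fin (2*n)), mC n C (n-1) = m (n-1) → mC n C n = m n →
      mC n C (n+1) = m (n+1) → (SCset n C)ᶜ = S := by
    intro C v1 v2 v3
    ext q
    have heq : mC n C q.1.1 = m q.1.1 := by
      rcases q.2.1 with e | e | e <;> rw [e] <;> assumption
    simp only [Set.mem_compl_iff]
    constructor
    · intro hq
      by_contra hqs
      exact hq (show q.1.2 ≤ mC n C q.1.1 by rw [heq]; exact (key q).mp hqs)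
    · intro hqs hqc
      have : q.1.2 ≤ m q.1.1 := by rw [← heq]; exact hqc
      exact ((key q).mpr this) hqs
  have hb2 : m n = m (n-1) ∨ m n = m (n-1) + 1 := by omega
  have hc2' : m (n+1) = m n ∨ m (n+1) = m n + 1 := by omega
  rcases hb2 with e1 | e1 <;> rcases hc2' with e2 | e2
  · -- Iset
    refine ⟨Iset n (m (n-1)), Or.inl ⟨m (n-1), by omega, ha_bd, rfl⟩, finish _ ?_ ?_ ?_⟩
    · rw [mC_Iset n _ (n-1) (by omega) (by omega)]
    · rw [mC_Iset n _ n (by omega) (by omega)]; omega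
    · rw [mC_Iset n _ (n+1) (by omega) (by omega)]; omega
  · -- JPset
    refine ⟨JPset n (m (n-1)), Or.inr (Or.inr (Or.inl ⟨m (n-1), ha_bd, rfl⟩)),
      finish _ ?_ ?_ ?_⟩
    · rw [mC_JPset_low n _ (n-1) hn ha_bd le_rfl (by omega)]
    · rw [mC_JPset_low n _ n hn ha_bd (by omega) le_rfl]; omega
    · rw [mC_JPset_np1 n _ hn ha_bd]; omega
  · -- Jset
    refine ⟨Jset n (m (n-1)), Or.inr (Or.inl ⟨m (n-1), ha_bd, rfl⟩), finish _ ?_ ?_ ?_⟩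
    · rw [mC_Jset_nm1 n _ hn ha_bd]
    · rw [mC_Jset_hi n _ n hn ha_bd le_rfl]; omega
    · rw [mC_Jset_hi n _ (n+1) hn ha_bd (by omega)]; omega
  · -- Kset
    have hk2 : m (n-1) ≤ n - 2 := by omega
    refine ⟨Kset n (m (n-1)), Or.inr (Or.inr (Or.inr ⟨m (n-1), hk2, rfl⟩)),
      finish _ ?_ ?_ ?_⟩
    · rw [mC_Kset_nm1 n _ hn hk2]
    · rw [mC_Kset_n n _ hn hk2]; omega
    · rw [mC_Kset_np1 n _ hn hk2]; omega

end Aux4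

/-- `C ↦ Γ ∖ S_C` is an order isomorphism from `(𝓛, ⪯)` onto the proper
down-sets of `Γ` ordered by inclusion. -/
theorem statement11 (n : ℕ) (hn : 2 ≤ n) :
    (∀ C ∈ LSet n, IsDownSet n ((SCset n C)ᶜ) ∧ (SCset n C)ᶜ ≠ (Set.univ : Set (Gamma n))) ∧
    Set.BijOn (fun C => (SCset n C)ᶜ) (LSet n)
      {S : Set (Gamma n) | IsDownSet n S ∧ S ≠ Set.univ} ∧
    (∀ C ∈ LSet n, ∀ C' ∈ LSet n, (LLE n C C' ↔ (SCset n C)ᶜ ⊆ (SCset n C')ᶜ)) := by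
  refine ⟨fun C hC => ⟨isDownSet_compl n C, compl_ne_univ hn hC⟩, ⟨?_, ?_, ?_⟩, ?_⟩
  · -- MapsTo
    intro C hC
    exact ⟨isDownSet_compl n C, compl_ne_univ hn hC⟩
  · -- InjOn
    intro C hC C' hC' h
    have hS : SCset n C = SCset n C' := by
      have h' : (SCset n C)ᶜ = (SCset n C')ᶜ := h
      rw [← compl_compl (SCset n C), h', compl_compl]
    have s1 : SCset n C' ⊆ SCset n C := by rw [hS]
    have s2 : SCset n C ⊆ SCset n C' := by rw [← hS]
    obtain ⟨u1, u2, u3⟩ := comp_of_subset hn hC' s1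
    obtain ⟨w1, w2, w3⟩ := comp_of_subset hn hC s2
    exact inj_comp hn hC hC' (by omega) (by omega) (by omega)
  · -- SurjOn
    intro S hSmem
    obtain ⟨C, hC, hCe⟩ := surj_aux hn hSmem.1 hSmem.2
    exact ⟨C, hC, hCe⟩
  · -- order iff
    intro C hC C' hC'
    constructor
    · intro h
      obtain ⟨_, u1, u2, u3⟩ := LLE_comp hn hC h
      exact Set.compl_subset_compl.mpr (subset_of_comp u1 u2 u3)
    · intro h
      have hsub : SCset n C' ⊆ SCset n C := Set.compl_subset_compl.mp h
      obtain ⟨u1, u2, u3⟩ := comp_of_subset hn hC' hsub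
      exact LLE_of_comp hn (mC n C (n-1) + mC n C n + mC n C (n+1)) C C' hC hC'
        le_rfl u1 u2 u3

end SpBranch
end
end

section
/- For C ∈ 𝓛, let S_C ⊆ Γ be the union over k ∈ {n−1, n, n+1} of {t_1^{(k)}, …, t_{m_C(k)}^{(k)}}, where m_C(k) = #{c ∈ C : c ≤ k}, and let χ_{S_C} : Γ → ℤ_{≥0} be the characteristic function of S_C. Then the map sending a multichain Δ = (C_1 ⪯ … ⪯ C_r) in 𝓛 to p(Δ) = Σ_{i=1}^{r} χ_{S_{C_i}} is a bijection from the set of all multichains in 𝓛 (including the empty multichain, which maps to 0) onto the monoid 𝓟(Γ) of order-preserving maps Γ → ℤ_{≥0}. Moreover, if Δ has shape F/D with F = (f_1,…,f_n) and D = (d_1,…,d_{n−1}), then p(Δ)(t_i^{(n+1)}) = f_i for 1 ≤ i ≤ n and p(Δ)(t_k^{(n−1)}) = d_k for 1 ≤ k ≤ n−1. -/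
noncomputable section

namespace SpBranch


set_option linter.unreachableTactic false
set_option linter.unusedTactic false
set_option maxHeartbeats 1000000
open Finset
set_option linter.unreachableTactic false
set_option linter.unusedTactic false

lemma card_filter_fin (N : ℕ) (P : ℕ → Prop) [DecidablePred P] :
    ((Finset.univ : Finset (Fin N)).filter fun x : Fin N => P (x:ℕ)).card
      = ((Finset.range N).filter P).card := by
  refine Finset.card_bij (fun (x : Fin N) (_ : x ∈ (Finset.univ.filter fun x : Fin N => P (x:ℕ))) => (x:ℕ)) ?_ ?_ ?_
  · intro a ha; simp at ha ⊢; exact ha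
  · intro a _ b _ h; exact Fin.val_injective h
  · intro b hb; simp at hb; exact ⟨⟨b, hb.1⟩, by simp [hb.2], by simp⟩

lemma range_filter_le_eq (K m : ℕ) :
    ((Finset.range K).filter fun v => v + 1 ≤ m) = Finset.range (min m K) := by
  ext v; simp; omega

lemma count_recover (K c i : ℕ) (f : ℕ → ℕ)
    (hanti : ∀ u v, u ≤ v → v < K → f v ≤ f u) (hiK : i < K) :
    c ≤ f i ↔ i + 1 ≤ ((Finset.range K).filter fun v => c ≤ f v).card := by
  constructor
  · intro h
    have hsub : Finset.range (i+1) ⊆ (Finset.range K).filter fun v => c ≤ f v := by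
      intro v hv; simp at hv ⊢
      exact ⟨by omega, le_trans h (hanti v i (by omega) hiK)⟩
    simpa using Finset.card_le_card hsub
  · intro h
    by_contra hc
    push_neg at hc
    have hsub : ((Finset.range K).filter fun v => c ≤ f v) ⊆ Finset.range i := by
      intro v hv; simp at hv ⊢
      by_contra hvi; push_neg at hvi
      exact absurd (le_trans hv.2 (hanti i v hvi hv.1)) (by omega)
    have := Finset.card_le_card hsub
    simp at this; omega

lemma count_recover_Icc (K c j : ℕ) (f : ℕ → ℕ)
    (hanti : ∀ u v, 1 ≤ u → u ≤ v → v ≤ K → f v ≤ f u) (hj : 1 ≤ j) (hjK : j ≤ K) :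
    c ≤ f j ↔ j ≤ ((Finset.Icc 1 K).filter fun v => c ≤ f v).card := by
  constructor
  · intro h
    have hsub : Finset.Icc 1 j ⊆ (Finset.Icc 1 K).filter fun v => c ≤ f v := by
      intro v hv; simp at hv ⊢
      exact ⟨⟨hv.1, le_trans hv.2 hjK⟩, le_trans h (hanti v j hv.1 hv.2 hjK)⟩
    have := Finset.card_le_card hsub
    simpa using this
  · intro h
    by_contra hc
    push_neg at hc
    have hsub : ((Finset.Icc 1 K).filter fun v => c ≤ f v) ⊆ Finset.Icc 1 (j-1) := by
      intro v hv; simp at hv ⊢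
      refine ⟨hv.1.1, ?_⟩
      by_contra hvj; push_neg at hvj
      exact absurd (le_trans hv.2 (hanti j v hj (by omega) hv.1.2)) (by omega)
    have := Finset.card_le_card hsub
    simp [Nat.card_Icc] at this ⊢; omega

lemma sum_map_ite {α : Type*} (d : α) (P : α → Prop) [DecidablePred P] :
    ∀ l : List α, (l.map fun a => if P a then 1 else 0).sum
      = ((Finset.range l.length).filter fun i => P (l.getD i d)).card := by
  intro l
  induction l with
  | nil => simp
  | cons a l ih =>
    rw [Finset.card_filter] at ih ⊢
    simp only [List.length_cons, Finset.sum_range_succ', List.getD_cons_succ, List.getD_cons_zero]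
    simp [ih]; ring



/-- `{1..m} ∪ (s ? {n}) ∪ (t ? {n+1})`. -/
def genSet (n m : ℕ) (s t : Bool) : Finset (Fin (2*n)) :=
  Finset.univ.filter (fun x => (x : ℕ) + 1 ≤ m ∨ (s ∧ (x : ℕ) + 1 = n) ∨ (t ∧ (x : ℕ) + 1 = n + 1))

lemma Iset_eq (n i : ℕ) : Iset n i = genSet n i false false := by
  ext x; simp [Iset, genSet]
lemma Jset_eq (n j : ℕ) : Jset n j = genSet n j true false := by
  ext x; simp [Jset, genSet]
lemma JPset_eq (n j : ℕ) : JPset n j = genSet n j false true := by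
  ext x; simp [JPset, genSet]
lemma Kset_eq (n k : ℕ) : Kset n k = genSet n k true true := by
  ext x; simp [Kset, genSet]

lemma mem_LSet_iff {n : ℕ} (hn : 2 ≤ n) {C : Finset (Fin (2*n))} :
    C ∈ LSet n ↔ ∃ m s t, m ≤ n - 1 ∧ 1 ≤ m + Bool.toNat s + Bool.toNat t ∧
      m + Bool.toNat s + Bool.toNat t ≤ n ∧ C = genSet n m s t := by
  constructor
  · rintro (⟨i, h1, h2, rfl⟩ | ⟨j, h1, rfl⟩ | ⟨j, h1, rfl⟩ | ⟨k, h1, rfl⟩)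
    · exact ⟨i, false, false, h2, by first | (simp; omega) | simp, by first | (simp; omega) | simp, Iset_eq n i⟩
    · exact ⟨j, true, false, h1, by first | (simp; omega) | simp, by first | (simp; omega) | simp, Jset_eq n j⟩
    · exact ⟨j, false, true, h1, by first | (simp; omega) | simp, by first | (simp; omega) | simp, JPset_eq n j⟩
    · exact ⟨k, true, true, by omega, by first | (simp; omega) | simp, by first | (simp; omega) | simp, Kset_eq n k⟩
  · rintro ⟨m, s, t, hm, h1, h2, rfl⟩
    rcases s <;> rcases t <;> simp [Bool.toNat] at h1 h2
    · exact Or.inl ⟨m, by omega, hm, (Iset_eq n m).symm⟩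
    · exact Or.inr (Or.inr (Or.inl ⟨m, hm, (JPset_eq n m).symm⟩))
    · exact Or.inr (Or.inl ⟨m, hm, (Jset_eq n m).symm⟩)
    · exact Or.inr (Or.inr (Or.inr ⟨m, by omega, (Kset_eq n m).symm⟩))


lemma card_filter_fin' (N : ℕ) (p : Fin N → Prop) [DecidablePred p]
    (Q : ℕ → Prop) [DecidablePred Q] (h : ∀ x : Fin N, p x ↔ Q (x:ℕ)) :
    (Finset.univ.filter p).card = ((Finset.range N).filter Q).card := by
  refine Finset.card_bij (fun (x : Fin N) (_ : x ∈ Finset.univ.filter p) => (x:ℕ)) ?_ ?_ ?_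
  · intro a ha; simp [h a] at ha; simp [ha]
  · intro a _ b _ hab; exact Fin.val_injective hab
  · intro b hb; simp at hb
    exact ⟨⟨b, hb.1⟩, by simp [h, hb.2], by simp⟩

-- helper: card of (range N).filter (v+1 ≤ m ∨ v = c ...) computations
lemma card_range_filter_le (N m : ℕ) :
    ((Finset.range N).filter fun v => v + 1 ≤ m).card = min m N := by
  rw [range_filter_le_eq, Finset.card_range]

lemma card_range_filter_le_or (N m c : ℕ) (hc : m ≤ c) (hcN : c < N) :
    ((Finset.range N).filter fun v => v + 1 ≤ m ∨ v = c).card = m + 1 := by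
  rw [Finset.filter_or, Finset.filter_eq']
  simp only [Finset.mem_range]
  rw [if_pos hcN, range_filter_le_eq, Finset.union_comm, ← Finset.insert_eq,
    Finset.card_insert_of_notMem (by simp; omega), Finset.card_range]
  omega

lemma card_range_filter_le_or2 (N m c c' : ℕ) (hc : m ≤ c) (hcc : c < c') (hcN : c' < N) :
    ((Finset.range N).filter fun v => (v + 1 ≤ m ∨ v = c) ∨ v = c').card = m + 2 := by
  rw [Finset.filter_or, Finset.filter_or, Finset.filter_eq', Finset.filter_eq']
  simp only [Finset.mem_range]
  rw [if_pos hcN, if_pos (by omega), range_filter_le_eq,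
    Finset.union_comm _ ({c'} : Finset ℕ), ← Finset.insert_eq,
    Finset.union_comm _ ({c} : Finset ℕ), ← Finset.insert_eq,
    Finset.card_insert_of_notMem (by simp; omega),
    Finset.card_insert_of_notMem (by simp; omega), Finset.card_range]
  omega

lemma mC_genSet (n m : ℕ) (s t : Bool) (k : ℕ) (hm : m ≤ n - 1) (hn : 2 ≤ n) :
    mC n (genSet n m s t) k
      = min m k + (if s ∧ n ≤ k then 1 else 0) + (if t ∧ n + 1 ≤ k then 1 else 0) := by
  classical
  rw [mC, genSet, Finset.filter_filter]
  rcases s <;> rcases t <;>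
    simp only [Bool.false_eq_true, false_and, false_or, true_and, or_false, if_false, if_true,
      and_true, and_false]
  · rw [card_filter_fin' _ _ (fun v => v + 1 ≤ min m k) (by intro x; omega),
      card_range_filter_le]
    simp; omega
  · -- s = false, t = true
    by_cases hk : n + 1 ≤ k
    · rw [card_filter_fin' _ _ (fun v => v + 1 ≤ min m k ∨ v = n) (by intro x; omega),
        card_range_filter_le_or _ _ _ (by omega) (by omega)]
      simp only [Nat.min_def]; split_ifs <;> omega
    · rw [card_filter_fin' _ _ (fun v => v + 1 ≤ min m k) (by intro x; omega),
        card_range_filter_le]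
      simp only [Nat.min_def]; split_ifs <;> omega
  · -- s = true, t = false
    by_cases hk : n ≤ k
    · rw [card_filter_fin' _ _ (fun v => v + 1 ≤ min m k ∨ v = n - 1) (by intro x; omega),
        card_range_filter_le_or _ _ _ (by omega) (by omega)]
      simp only [Nat.min_def]; split_ifs <;> omega
    · rw [card_filter_fin' _ _ (fun v => v + 1 ≤ min m k) (by intro x; omega),
        card_range_filter_le]
      simp only [Nat.min_def]; split_ifs <;> omega
  · -- s = t = true
    by_cases hk : n + 1 ≤ k
    · rw [card_filter_fin' _ _ (fun v => (v + 1 ≤ min m k ∨ v = n - 1) ∨ v = n)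
          (by intro x; omega),
        card_range_filter_le_or2 _ _ _ _ (by omega) (by omega) (by omega)]
      simp only [Nat.min_def]; split_ifs <;> omega
    · by_cases hk2 : n ≤ k
      · rw [card_filter_fin' _ _ (fun v => v + 1 ≤ min m k ∨ v = n - 1) (by intro x; omega),
          card_range_filter_le_or _ _ _ (by omega) (by omega)]
        simp only [Nat.min_def]; split_ifs <;> omega
      · rw [card_filter_fin' _ _ (fun v => v + 1 ≤ min m k) (by intro x; omega),
          card_range_filter_le]
        simp only [Nat.min_def]; split_ifs <;> omega

lemma mC_genSet_pred {n m : ℕ} (s t : Bool) (hm : m ≤ n - 1) (hn : 2 ≤ n) :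
    mC n (genSet n m s t) (n-1) = m := by
  rw [mC_genSet n m s t _ hm hn]
  rcases s <;> rcases t <;> simp only [Nat.min_def, Bool.toNat] <;> split_ifs <;> simp_all <;> omega

lemma mC_genSet_n {n m : ℕ} (s t : Bool) (hm : m ≤ n - 1) (hn : 2 ≤ n) :
    mC n (genSet n m s t) n = m + s.toNat := by
  rw [mC_genSet n m s t _ hm hn]
  rcases s <;> rcases t <;> simp only [Nat.min_def, Bool.toNat] <;> split_ifs <;> simp_all <;> omega

lemma mC_genSet_succ {n m : ℕ} (s t : Bool) (hm : m ≤ n - 1) (hn : 2 ≤ n) :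
    mC n (genSet n m s t) (n+1) = m + s.toNat + t.toNat := by
  rw [mC_genSet n m s t _ hm hn]
  rcases s <;> rcases t <;> simp only [Nat.min_def, Bool.toNat] <;> split_ifs <;> simp_all <;> omega

lemma card_genSet {n m : ℕ} (s t : Bool) (hm : m ≤ n - 1) (hn : 2 ≤ n) :
    (genSet n m s t).card = m + s.toNat + t.toNat := by
  have h : (genSet n m s t).filter (fun x : Fin (2*n) => (x:ℕ) + 1 ≤ n + 1) = genSet n m s t := by
    rw [Finset.filter_eq_self]
    intro x hx
    simp [genSet] at hx
    rcases s <;> rcases t <;> simp_all <;> omega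
  rw [← h]
  exact mC_genSet_succ s t hm hn

lemma genSet_inj {n : ℕ} {m m' : ℕ} {s s' t t' : Bool} (hm : m ≤ n - 1) (hm' : m' ≤ n - 1)
    (hn : 2 ≤ n) (h : genSet n m s t = genSet n m' s' t') : m = m' ∧ s = s' ∧ t = t' := by
  have h1 := mC_genSet_pred (n := n) s t hm hn
  have h2 := mC_genSet_n (n := n) s t hm hn
  have h3 := mC_genSet_succ (n := n) s t hm hn
  rw [h] at h1 h2 h3
  rw [mC_genSet_pred s' t' hm' hn] at h1
  rw [mC_genSet_n s' t' hm' hn] at h2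
  rw [mC_genSet_succ s' t' hm' hn] at h3
  rcases s <;> rcases s' <;> rcases t <;> rcases t' <;> simp [Bool.toNat] at h1 h2 h3 ⊢ <;> omega

lemma label_mem_genSet {n m : ℕ} (s t : Bool) (hm : m ≤ n - 1) (hn : 2 ≤ n)
    {k : ℕ} (hk1 : 1 ≤ k) (hk : k ≤ n - 1) :
    (∃ x : Fin (2*n), x ∈ genSet n m s t ∧ (x:ℕ) + 1 = k) ↔ k ≤ m := by
  constructor
  · rintro ⟨x, hx, hxk⟩
    simp [genSet] at hx
    rcases hx with h | ⟨_, h⟩ | ⟨_, h⟩ <;> omega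
  · intro hkm
    refine ⟨⟨k - 1, by omega⟩, ?_, by simp; omega⟩
    simp [genSet]
    left; omega

lemma Iset_mem {n i : ℕ} (h1 : 1 ≤ i) (h2 : i ≤ n-1) : Iset n i ∈ LSet n :=
  Or.inl ⟨i, h1, h2, rfl⟩
lemma Jset_mem {n j : ℕ} (h : j ≤ n-1) : Jset n j ∈ LSet n := Or.inr (Or.inl ⟨j, h, rfl⟩)
lemma JPset_mem {n j : ℕ} (h : j ≤ n-1) : JPset n j ∈ LSet n :=
  Or.inr (Or.inr (Or.inl ⟨j, h, rfl⟩))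
lemma Kset_mem {n k : ℕ} (h : k ≤ n-2) : Kset n k ∈ LSet n :=
  Or.inr (Or.inr (Or.inr ⟨k, h, rfl⟩))

lemma trip_Iset {n i : ℕ} (hi : i ≤ n-1) (hn : 2 ≤ n) :
    mC n (Iset n i) (n-1) = i ∧ mC n (Iset n i) n = i ∧ mC n (Iset n i) (n+1) = i := by
  rw [Iset_eq]
  refine ⟨mC_genSet_pred _ _ hi hn, ?_, ?_⟩
  · rw [mC_genSet_n _ _ hi hn]; simp [Bool.toNat]
  · rw [mC_genSet_succ _ _ hi hn]; simp [Bool.toNat]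

lemma trip_Jset {n j : ℕ} (hj : j ≤ n-1) (hn : 2 ≤ n) :
    mC n (Jset n j) (n-1) = j ∧ mC n (Jset n j) n = j+1 ∧ mC n (Jset n j) (n+1) = j+1 := by
  rw [Jset_eq]
  refine ⟨mC_genSet_pred _ _ hj hn, ?_, ?_⟩
  · rw [mC_genSet_n _ _ hj hn]; simp [Bool.toNat]
  · rw [mC_genSet_succ _ _ hj hn]; simp [Bool.toNat]

lemma trip_JPset {n j : ℕ} (hj : j ≤ n-1) (hn : 2 ≤ n) :
    mC n (JPset n j) (n-1) = j ∧ mC n (JPset n j) n = j ∧ mC n (JPset n j) (n+1) = j+1 := by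
  rw [JPset_eq]
  refine ⟨mC_genSet_pred _ _ hj hn, ?_, ?_⟩
  · rw [mC_genSet_n _ _ hj hn]; simp [Bool.toNat]
  · rw [mC_genSet_succ _ _ hj hn]; simp [Bool.toNat]

lemma trip_Kset {n k : ℕ} (hk : k ≤ n-2) (hn : 2 ≤ n) :
    mC n (Kset n k) (n-1) = k ∧ mC n (Kset n k) n = k+1 ∧ mC n (Kset n k) (n+1) = k+2 := by
  rw [Kset_eq]
  refine ⟨mC_genSet_pred _ _ (by omega) hn, ?_, ?_⟩
  · rw [mC_genSet_n _ _ (by omega) hn]; simp [Bool.toNat]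
  · rw [mC_genSet_succ _ _ (by omega) hn]; simp [Bool.toNat]



lemma LGen_step {n : ℕ} (hn : 2 ≤ n) {C C' : Finset (Fin (2*n))} (h : LGen n C C') :
    C ∈ LSet n ∧ C' ∈ LSet n ∧
    mC n C' (n-1) ≤ mC n C (n-1) ∧ mC n C' n ≤ mC n C n ∧ mC n C' (n+1) ≤ mC n C (n+1) := by
  obtain ⟨i, hi1, hi2, hcase⟩ := h
  rcases hcase with ⟨rfl, rfl⟩|⟨rfl, rfl⟩|⟨rfl, rfl⟩|⟨rfl, rfl⟩|⟨rfl, rfl⟩|⟨rfl, rfl⟩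
  · obtain ⟨a1,a2,a3⟩ := trip_Jset hi2 hn
    obtain ⟨b1,b2,b3⟩ := trip_JPset hi2 hn
    exact ⟨Jset_mem hi2, JPset_mem hi2, by omega, by omega, by omega⟩
  · obtain ⟨a1,a2,a3⟩ := trip_JPset hi2 hn
    obtain ⟨b1,b2,b3⟩ := trip_Iset hi2 hn
    exact ⟨JPset_mem hi2, Iset_mem hi1 hi2, by omega, by omega, by omega⟩
  · obtain ⟨a1,a2,a3⟩ := trip_JPset hi2 hn
    obtain ⟨b1,b2,b3⟩ := trip_Kset (k := i-1) (by omega) hn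
    exact ⟨JPset_mem hi2, Kset_mem (by omega), by omega, by omega, by omega⟩
  · obtain ⟨a1,a2,a3⟩ := trip_Iset hi2 hn
    obtain ⟨b1,b2,b3⟩ := trip_Jset (j := i-1) (by omega) hn
    exact ⟨Iset_mem hi1 hi2, Jset_mem (by omega), by omega, by omega, by omega⟩
  · obtain ⟨a1,a2,a3⟩ := trip_Kset (k := i-1) (by omega) hn
    obtain ⟨b1,b2,b3⟩ := trip_Jset (j := i-1) (by omega) hn
    exact ⟨Kset_mem (by omega), Jset_mem (by omega), by omega, by omega, by omega⟩
  · obtain ⟨a1,a2,a3⟩ := trip_Jset (j := i-1) (by omega) hn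
    obtain ⟨b1,b2,b3⟩ := trip_JPset (j := i-1) (by omega) hn
    exact ⟨Jset_mem (by omega), JPset_mem (by omega), by omega, by omega, by omega⟩

lemma LLE_mC_le {n : ℕ} (hn : 2 ≤ n) {C C' : Finset (Fin (2*n))} (h : LLE n C C') :
    (mC n C' (n-1) ≤ mC n C (n-1) ∧ mC n C' n ≤ mC n C n ∧ mC n C' (n+1) ≤ mC n C (n+1)) := by
  induction h with
  | refl => exact ⟨le_rfl, le_rfl, le_rfl⟩
  | tail _ hstep ih =>
    obtain ⟨_, _, h1, h2, h3⟩ := LGen_step hn hstep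
    exact ⟨le_trans h1 ih.1, le_trans h2 ih.2.1, le_trans h3 ih.2.2⟩

lemma comp_to_LLE {n : ℕ} (hn : 2 ≤ n) :
    ∀ (N : ℕ) (C C' : Finset (Fin (2*n))), C ∈ LSet n → C' ∈ LSet n →
    mC n C (n-1) + mC n C n + mC n C (n+1) ≤ N →
    mC n C' (n-1) ≤ mC n C (n-1) → mC n C' n ≤ mC n C n → mC n C' (n+1) ≤ mC n C (n+1) →
    LLE n C C' := by
  intro N
  induction N with
  | zero =>
    intro C C' hC hC' hsum h1 h2 h3
    obtain ⟨m, s, t, hm, hlo, hhi, rfl⟩ := (mem_LSet_iff hn).mp hC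
    have h3' := mC_genSet_succ s t hm hn
    omega
  | succ N ih =>
    intro C C' hC hC' hsum h1 h2 h3
    obtain ⟨m, s, t, hm, hlo, hhi, rfl⟩ := (mem_LSet_iff hn).mp hC
    obtain ⟨m', s', t', hm', hlo', hhi', rfl⟩ := (mem_LSet_iff hn).mp hC'
    have e1' := mC_genSet_pred s' t' hm' hn
    have e2' := mC_genSet_n s' t' hm' hn
    have e3' := mC_genSet_succ s' t' hm' hn
    rw [mC_genSet_pred s t hm hn, e1'] at h1
    rw [mC_genSet_n s t hm hn, e2'] at h2
    rw [mC_genSet_succ s t hm hn, e3'] at h3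
    rw [mC_genSet_pred s t hm hn, mC_genSet_n s t hm hn, mC_genSet_succ s t hm hn] at hsum
    have hs' : s'.toNat ≤ 1 := by rcases s' <;> simp
    have ht' : t'.toNat ≤ 1 := by rcases t' <;> simp
    by_cases heq : m = m' ∧ s.toNat = s'.toNat ∧ t.toNat = t'.toNat
    · obtain ⟨hm2, hst, htt⟩ := heq
      have hss : s = s' := by rcases s <;> rcases s' <;> simp_all
      have httt : t = t' := by rcases t <;> rcases t' <;> simp_all
      subst hm2; subst hss; subst httt
      exact Relation.ReflTransGen.refl
    · rcases s <;> rcases t <;>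
        simp only [Bool.toNat_true, Bool.toNat_false] at h1 h2 h3 hsum heq hhi hlo
      · -- s = false, t = false : C = I_m, step to J_{m-1}
        have hm1 : 1 ≤ m := by omega
        have hC'' : genSet n (m-1) true false ∈ LSet n :=
          (mem_LSet_iff hn).mpr ⟨m-1, true, false, by omega, by simp, by simp; omega, rfl⟩
        have hgen : LGen n (genSet n m false false) (genSet n (m-1) true false) :=
          ⟨m, hm1, hm, Or.inr (Or.inr (Or.inr (Or.inl
            ⟨(Iset_eq n m).symm, (Jset_eq n (m-1)).symm⟩)))⟩
        have p1 := mC_genSet_pred (n := n) (m := m-1) true false (by omega) hn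
        have p2 := mC_genSet_n (n := n) (m := m-1) true false (by omega) hn
        have p3 := mC_genSet_succ (n := n) (m := m-1) true false (by omega) hn
        refine Relation.ReflTransGen.head hgen (ih _ _ hC'' hC' ?_ ?_ ?_ ?_) <;>
          simp only [p1, p2, p3, e1', e2', e3', Bool.toNat_true, Bool.toNat_false] <;> omega
      · -- s = false, t = true : C = JP_m
        by_cases hz : m' + s'.toNat + t'.toNat ≤ m
        · -- step to I_m
          have hm1 : 1 ≤ m := by omega
          have hC'' : genSet n m false false ∈ LSet n :=
            (mem_LSet_iff hn).mpr ⟨m, false, false, hm, by simp; omega, by simp; omega, rfl⟩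
          have hgen : LGen n (genSet n m false true) (genSet n m false false) :=
            ⟨m, hm1, hm, Or.inr (Or.inl ⟨(JPset_eq n m).symm, (Iset_eq n m).symm⟩)⟩
          have p1 := mC_genSet_pred (n := n) (m := m) false false hm hn
          have p2 := mC_genSet_n (n := n) (m := m) false false hm hn
          have p3 := mC_genSet_succ (n := n) (m := m) false false hm hn
          refine Relation.ReflTransGen.head hgen (ih _ _ hC'' hC' ?_ ?_ ?_ ?_) <;>
            simp only [p1, p2, p3, e1', e2', e3', Bool.toNat_true, Bool.toNat_false] <;> omega
        · -- step to K_{m-1}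
          have hm1 : 1 ≤ m ∧ m' + 1 ≤ m := by omega
          have hC'' : genSet n (m-1) true true ∈ LSet n :=
            (mem_LSet_iff hn).mpr ⟨m-1, true, true, by omega, by simp, by simp; omega, rfl⟩
          have hgen : LGen n (genSet n m false true) (genSet n (m-1) true true) :=
            ⟨m, hm1.1, hm, Or.inr (Or.inr (Or.inl
              ⟨(JPset_eq n m).symm, (Kset_eq n (m-1)).symm⟩))⟩
          have p1 := mC_genSet_pred (n := n) (m := m-1) true true (by omega) hn
          have p2 := mC_genSet_n (n := n) (m := m-1) true true (by omega) hn
          have p3 := mC_genSet_succ (n := n) (m := m-1) true true (by omega) hn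
          refine Relation.ReflTransGen.head hgen (ih _ _ hC'' hC' ?_ ?_ ?_ ?_) <;>
            simp only [p1, p2, p3, e1', e2', e3', Bool.toNat_true, Bool.toNat_false] <;> omega
      · -- s = true, t = false : C = J_m, step to JP_m
        have hC'' : genSet n m false true ∈ LSet n :=
          (mem_LSet_iff hn).mpr ⟨m, false, true, hm, by simp, by simp; omega, rfl⟩
        have hgen : LGen n (genSet n m true false) (genSet n m false true) := by
          by_cases hm1 : 1 ≤ m
          · exact ⟨m, hm1, hm, Or.inl ⟨(Jset_eq n m).symm, (JPset_eq n m).symm⟩⟩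
          · have hm0 : m = 0 := by omega
            subst hm0
            exact ⟨1, le_rfl, by omega, Or.inr (Or.inr (Or.inr (Or.inr (Or.inr
              ⟨(Jset_eq n 0).symm, (JPset_eq n 0).symm⟩))))⟩
        have p1 := mC_genSet_pred (n := n) (m := m) false true hm hn
        have p2 := mC_genSet_n (n := n) (m := m) false true hm hn
        have p3 := mC_genSet_succ (n := n) (m := m) false true hm hn
        refine Relation.ReflTransGen.head hgen (ih _ _ hC'' hC' ?_ ?_ ?_ ?_) <;>
          simp only [p1, p2, p3, e1', e2', e3', Bool.toNat_true, Bool.toNat_false] <;> omega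
      · -- s = true, t = true : C = K_m, step to J_m
        have hC'' : genSet n m true false ∈ LSet n :=
          (mem_LSet_iff hn).mpr ⟨m, true, false, hm, by simp, by simp; omega, rfl⟩
        have hgen : LGen n (genSet n m true true) (genSet n m true false) :=
          ⟨m+1, by omega, by omega, Or.inr (Or.inr (Or.inr (Or.inr (Or.inl
            ⟨by rw [show m+1-1 = m from rfl]; exact (Kset_eq n m).symm,
             by rw [show m+1-1 = m from rfl]; exact (Jset_eq n m).symm⟩))))⟩
        have p1 := mC_genSet_pred (n := n) (m := m) true false hm hn
        have p2 := mC_genSet_n (n := n) (m := m) true false hm hn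
        have p3 := mC_genSet_succ (n := n) (m := m) true false hm hn
        refine Relation.ReflTransGen.head hgen (ih _ _ hC'' hC' ?_ ?_ ?_ ?_) <;>
          simp only [p1, p2, p3, e1', e2', e3', Bool.toNat_true, Bool.toNat_false] <;> omega

lemma mC_gap {n : ℕ} (hn : 2 ≤ n) {C : Finset (Fin (2*n))} (hC : C ∈ LSet n) :
    mC n C n ≤ mC n C (n-1) + 1 ∧ mC n C (n+1) ≤ mC n C n + 1 ∧ 1 ≤ mC n C (n+1) ∧
    mC n C (n+1) ≤ n ∧ mC n C (n-1) ≤ n - 1 ∧ mC n C n ≤ n ∧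
    mC n C (n-1) ≤ mC n C n ∧ mC n C n ≤ mC n C (n+1) ∧ C.card = mC n C (n+1) := by
  obtain ⟨m, s, t, hm, hlo, hhi, rfl⟩ := (mem_LSet_iff hn).mp hC
  rw [mC_genSet_pred s t hm hn, mC_genSet_n s t hm hn, mC_genSet_succ s t hm hn,
    card_genSet s t hm hn]
  have hs : s.toNat ≤ 1 := by rcases s <;> simp
  have ht : t.toNat ≤ 1 := by rcases t <;> simp
  omega










lemma chiS_mono {n : ℕ} (hn : 2 ≤ n) {C : Finset (Fin (2*n))} (hC : C ∈ LSet n)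
    {x y : Gamma n} (h : GammaLE n x y) : chiS n C x ≤ chiS n C y := by
  induction h with
  | refl => exact le_rfl
  | tail _ hstep ih =>
    refine le_trans ih ?_
    rename_i a b _
    obtain ⟨⟨ia, ja⟩, hga⟩ := a
    obtain ⟨⟨ib, jb⟩, hgb⟩ := b
    simp only [chiS]
    rcases hstep with ⟨h1, h2⟩ | ⟨h1, h2⟩ <;> simp only at h1 h2 <;> subst h1 <;> subst h2
    · have := mC_mono n C (show ia ≤ ia + 1 by omega)
      split_ifs <;> omega
    · -- a = (ib+1, jb+1) ≤ b = (ib, jb)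
      obtain ⟨hrow, hj1, hj2⟩ := hgb
      obtain ⟨hrow', _, _⟩ := hga
      simp only at hrow hrow' hj1 hj2
      have hgap := mC_gap hn hC
      rcases hrow with hb | hb | hb
      · -- ib = n - 1, a row = n
        have e1 : mC n C (ib + 1) = mC n C n := by rw [show ib + 1 = n by omega]
        have e2 : mC n C ib = mC n C (n-1) := by rw [hb]
        rw [e1, e2]
        split_ifs <;> omega
      · -- ib = n, a row = n+1
        have e1 : mC n C (ib + 1) = mC n C (n+1) := by rw [show ib + 1 = n + 1 by omega]
        have e2 : mC n C ib = mC n C n := by rw [hb]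
        rw [e1, e2]
        split_ifs <;> omega
      · -- ib = n+1 : impossible
        exfalso; omega

instance instTransLLE (n : ℕ) : IsTrans (Finset (Fin (2*n))) (LLE n) :=
  ⟨fun _ _ _ => Relation.ReflTransGen.trans⟩

lemma pMap_card {n : ℕ} (l : List (Finset (Fin (2*n)))) (q : Gamma n) :
    pMap n l q
      = ((Finset.range l.length).filter fun i => q.1.2 ≤ mC n (l.getD i ∅) q.1.1).card := by
  rw [pMap]
  simp only [chiS]
  rw [sum_map_ite ∅ (fun C => q.1.2 ≤ mC n C q.1.1) l]

lemma multichain_anti {n : ℕ} (hn : 2 ≤ n) {l : List (Finset (Fin (2*n)))}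
    (hl : IsMultichain n l) (k : ℕ) (hk3 : k = n-1 ∨ k = n ∨ k = n+1) :
    ∀ u v, u ≤ v → v < l.length → mC n (l.getD v ∅) k ≤ mC n (l.getD u ∅) k := by
  intro u v huv hv
  rcases Nat.eq_or_lt_of_le huv with rfl | hlt
  · exact le_rfl
  · have hp : List.Pairwise (LLE n) l := List.isChain_iff_pairwise.mp hl.2
    have hle : LLE n (l.get ⟨u, by omega⟩) (l.get ⟨v, hv⟩) :=
      List.pairwise_iff_get.mp hp ⟨u, by omega⟩ ⟨v, hv⟩ hlt
    rw [List.getD_eq_getElem l ∅ hv, List.getD_eq_getElem l ∅ (by omega : u < l.length)]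
    have := LLE_mC_le hn hle
    rcases hk3 with rfl | rfl | rfl
    · exact this.1
    · exact this.2.1
    · exact this.2.2

lemma getD_mem_LSet {n : ℕ} {l : List (Finset (Fin (2*n)))}
    (hl : IsMultichain n l) {i : ℕ} (hi : i < l.length) : l.getD i ∅ ∈ LSet n := by
  rw [List.getD_eq_getElem l ∅ hi]
  exact hl.1 _ (List.getElem_mem hi)

lemma mC_le_of_pMap_le {n : ℕ} (hn : 2 ≤ n) {l l' : List (Finset (Fin (2*n)))}
    (hl : IsMultichain n l) (hl' : IsMultichain n l') (hlen : l.length = l'.length)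
    (h : pMap n l = pMap n l') {k : ℕ} (hk3 : k = n-1 ∨ k = n ∨ k = n+1)
    {i : ℕ} (hi : i < l.length) :
    mC n (l.getD i ∅) k ≤ mC n (l'.getD i ∅) k := by
  set j := mC n (l.getD i ∅) k with hj
  rcases Nat.eq_zero_or_pos j with hj0 | hj0
  · omega
  have hgap := mC_gap hn (getD_mem_LSet hl hi)
  have hjle : j ≤ min k n := by rcases hk3 with rfl | rfl | rfl <;> simp [Nat.min_def] <;> omega
  have hq : GammaCond n (k, j) := ⟨hk3, hj0, hjle⟩
  have h1 : i + 1 ≤ ((Finset.range l.length).filter fun v => j ≤ mC n (l.getD v ∅) k).card :=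
    (count_recover l.length j i _ (multichain_anti hn hl k hk3) hi).mp le_rfl
  have h2 := pMap_card l ⟨(k, j), hq⟩
  have h3 := pMap_card l' ⟨(k, j), hq⟩
  rw [h] at h2
  rw [h2] at h3
  rw [← hlen] at h3
  have h4 : i + 1 ≤ ((Finset.range l.length).filter fun v => j ≤ mC n (l'.getD v ∅) k).card := by
    simp only at h3
    omega
  have := (count_recover l.length j i (fun v => mC n (l'.getD v ∅) k)
    (by intro u v huv hv; exact multichain_anti hn hl' k hk3 u v huv (by omega)) hi).mpr h4
  exact this

lemma LSet_eq_of_mC {n : ℕ} (hn : 2 ≤ n) {A B : Finset (Fin (2*n))}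
    (hA : A ∈ LSet n) (hB : B ∈ LSet n)
    (h1 : mC n A (n-1) = mC n B (n-1)) (h2 : mC n A n = mC n B n)
    (h3 : mC n A (n+1) = mC n B (n+1)) : A = B := by
  obtain ⟨m, s, t, hm, hlo, hhi, rfl⟩ := (mem_LSet_iff hn).mp hA
  obtain ⟨m', s', t', hm', hlo', hhi', rfl⟩ := (mem_LSet_iff hn).mp hB
  rw [mC_genSet_pred s t hm hn, mC_genSet_pred s' t' hm' hn] at h1
  rw [mC_genSet_n s t hm hn, mC_genSet_n s' t' hm' hn] at h2
  rw [mC_genSet_succ s t hm hn, mC_genSet_succ s' t' hm' hn] at h3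
  have hmm : m = m' := h1
  have hss : s = s' := by rcases s <;> rcases s' <;> simp_all
  have htt : t = t' := by rcases t <;> rcases t' <;> simp_all
  rw [hmm, hss, htt]

lemma pMap_inj {n : ℕ} (hn : 2 ≤ n) {l l' : List (Finset (Fin (2*n)))}
    (hl : IsMultichain n l) (hl' : IsMultichain n l') (h : pMap n l = pMap n l') : l = l' := by
  have hq1 : GammaCond n (n+1, 1) := ⟨Or.inr (Or.inr rfl), le_rfl, by simp [Nat.min_def]; omega⟩
  have hlen0 : ∀ (m : List (Finset (Fin (2*n)))), IsMultichain n m →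
      pMap n m ⟨(n+1, 1), hq1⟩ = m.length := by
    intro m hm
    refine (pMap_card _ _).trans ?_
    have : ((Finset.range m.length).filter
        fun i => (1:ℕ) ≤ mC n (m.getD i ∅) (n+1)) = Finset.range m.length := by
      rw [Finset.filter_eq_self]
      intro i hi
      simp only [Finset.mem_range] at hi
      exact (mC_gap hn (getD_mem_LSet hm hi)).2.2.1
    simp only at this ⊢
    rw [this, Finset.card_range]
  have hlen : l.length = l'.length := by
    rw [← hlen0 l hl, ← hlen0 l' hl', h]
  refine List.ext_get hlen ?_
  intro i h1 h2
  have hgd : ∀ k, (k = n-1 ∨ k = n ∨ k = n+1) →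
      mC n (l.getD i ∅) k = mC n (l'.getD i ∅) k := by
    intro k hk3
    have hle1 := mC_le_of_pMap_le hn hl hl' hlen h hk3 h1
    have hle2 := mC_le_of_pMap_le hn hl' hl hlen.symm h.symm hk3 (show i < l'.length by omega)
    omega
  have heq : l.getD i ∅ = l'.getD i ∅ :=
    LSet_eq_of_mC hn (getD_mem_LSet hl h1) (getD_mem_LSet hl' h2)
      (hgd _ (Or.inl rfl)) (hgd _ (Or.inr (Or.inl rfl))) (hgd _ (Or.inr (Or.inr rfl)))
  rw [List.getD_eq_getElem l ∅ h1, List.getD_eq_getElem l' ∅ h2] at heq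
  exact heq

def Pext (n : ℕ) (p : Gamma n → ℕ) : ℕ × ℕ → ℕ :=
  fun q => if h : GammaCond n q then p ⟨q, h⟩ else 0

lemma gc (n k j : ℕ) (h1 : k = n - 1 ∨ k = n ∨ k = n+1) (h2 : 1 ≤ j) (h3 : j ≤ min k n) :
    GammaCond n (k, j) := ⟨h1, h2, h3⟩

lemma Pext_step {n : ℕ} (p : Gamma n → ℕ) (hp : ∀ x y, GammaLE n x y → p x ≤ p y)
    {k j k' j' : ℕ} (hq : GammaCond n (k, j)) (hq' : GammaCond n (k', j'))
    (hstep : (k' = k + 1 ∧ j' = j) ∨ (k = k' + 1 ∧ j = j' + 1)) :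
    Pext n p (k, j) ≤ Pext n p (k', j') := by
  rw [Pext, Pext, dif_pos hq, dif_pos hq']
  exact hp _ _ (Relation.ReflTransGen.single hstep)

lemma anti_of_step1 (K : ℕ) (f : ℕ → ℕ) (h : ∀ v, 1 ≤ v → v + 1 ≤ K → f (v+1) ≤ f v) :
    ∀ u v, 1 ≤ u → u ≤ v → v ≤ K → f v ≤ f u := by
  intro u v hu huv
  induction v, huv using Nat.le_induction with
  | base => intro _; exact le_rfl
  | succ v hv ih => intro hvK; exact le_trans (h v (by omega) hvK) (ih (by omega))

lemma anti_of_succ (f : ℕ → ℕ) (h : ∀ v, f (v+1) ≤ f v) : ∀ u v, u ≤ v → f v ≤ f u := by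
  intro u v huv
  induction v, huv using Nat.le_induction with
  | base => exact le_rfl
  | succ v hv ih => exact le_trans (h v) ih

section Surj
variable {n : ℕ}

lemma rowA_anti (hn : 2 ≤ n) (p : Gamma n → ℕ) (hp : ∀ x y, GammaLE n x y → p x ≤ p y) :
    ∀ u v, 1 ≤ u → u ≤ v → v ≤ n → Pext n p (n+1, v) ≤ Pext n p (n+1, u) := by
  refine anti_of_step1 n _ (fun v h1 h2 => ?_)
  refine le_trans (Pext_step p hp (gc n _ _ (Or.inr (Or.inr rfl)) (by omega) (by omega))
    (gc n _ _ (Or.inr (Or.inl rfl)) (by omega) (by omega)) (Or.inr ⟨rfl, rfl⟩)) ?_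
  exact Pext_step p hp (gc n _ _ (Or.inr (Or.inl rfl)) (by omega) (by omega))
    (gc n _ _ (Or.inr (Or.inr rfl)) (by omega) (by omega)) (Or.inl ⟨rfl, rfl⟩)

lemma rowB_anti (hn : 2 ≤ n) (p : Gamma n → ℕ) (hp : ∀ x y, GammaLE n x y → p x ≤ p y) :
    ∀ u v, 1 ≤ u → u ≤ v → v ≤ n → Pext n p (n, v) ≤ Pext n p (n, u) := by
  refine anti_of_step1 n _ (fun v h1 h2 => ?_)
  refine le_trans (Pext_step p hp (gc n _ _ (Or.inr (Or.inl rfl)) (by omega) (by omega))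
    (gc n _ _ (Or.inl rfl) (by omega) (by omega)) (Or.inr ⟨by omega, rfl⟩)) ?_
  exact Pext_step p hp (gc n _ _ (Or.inl rfl) (by omega) (by omega))
    (gc n _ _ (Or.inr (Or.inl rfl)) (by omega) (by omega)) (Or.inl ⟨by omega, rfl⟩)

lemma rowC_anti (hn : 2 ≤ n) (p : Gamma n → ℕ) (hp : ∀ x y, GammaLE n x y → p x ≤ p y) :
    ∀ u v, 1 ≤ u → u ≤ v → v ≤ n - 1 → Pext n p (n-1, v) ≤ Pext n p (n-1, u) := by
  refine anti_of_step1 (n-1) _ (fun v h1 h2 => ?_)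
  refine le_trans (Pext_step p hp (gc n _ _ (Or.inl rfl) (by omega) (by omega))
    (gc n _ _ (Or.inr (Or.inl rfl)) (by omega) (by omega)) (Or.inl ⟨by omega, rfl⟩)) ?_
  exact Pext_step p hp (gc n _ _ (Or.inr (Or.inl rfl)) (by omega) (by omega))
    (gc n _ _ (Or.inl rfl) (by omega) (by omega)) (Or.inr ⟨by omega, rfl⟩)

lemma CB_le (hn : 2 ≤ n) (p : Gamma n → ℕ) (hp : ∀ x y, GammaLE n x y → p x ≤ p y)
    {v : ℕ} (h1 : 1 ≤ v) (h2 : v ≤ n - 1) : Pext n p (n-1, v) ≤ Pext n p (n, v) :=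
  Pext_step p hp (gc n _ _ (Or.inl rfl) (by omega) (by omega))
    (gc n _ _ (Or.inr (Or.inl rfl)) (by omega) (by omega)) (Or.inl ⟨by omega, rfl⟩)

lemma BA_le (hn : 2 ≤ n) (p : Gamma n → ℕ) (hp : ∀ x y, GammaLE n x y → p x ≤ p y)
    {v : ℕ} (h1 : 1 ≤ v) (h2 : v ≤ n) : Pext n p (n, v) ≤ Pext n p (n+1, v) :=
  Pext_step p hp (gc n _ _ (Or.inr (Or.inl rfl)) (by omega) (by omega))
    (gc n _ _ (Or.inr (Or.inr rfl)) (by omega) (by omega)) (Or.inl ⟨rfl, rfl⟩)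

lemma BC_le (hn : 2 ≤ n) (p : Gamma n → ℕ) (hp : ∀ x y, GammaLE n x y → p x ≤ p y)
    {v : ℕ} (h1 : 2 ≤ v) (h2 : v ≤ n) : Pext n p (n, v) ≤ Pext n p (n-1, v-1) :=
  Pext_step p hp (gc n _ _ (Or.inr (Or.inl rfl)) (by omega) (by omega))
    (gc n _ _ (Or.inl rfl) (by omega) (by omega)) (Or.inr ⟨by omega, by omega⟩)

lemma AB_le (hn : 2 ≤ n) (p : Gamma n → ℕ) (hp : ∀ x y, GammaLE n x y → p x ≤ p y)
    {v : ℕ} (h1 : 2 ≤ v) (h2 : v ≤ n) : Pext n p (n+1, v) ≤ Pext n p (n, v-1) :=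
  Pext_step p hp (gc n _ _ (Or.inr (Or.inr rfl)) (by omega) (by omega))
    (gc n _ _ (Or.inr (Or.inl rfl)) (by omega) (by omega)) (Or.inr ⟨by omega, by omega⟩)

end Surj

lemma pMap_surj {n : ℕ} (hn : 2 ≤ n) (p : Gamma n → ℕ)
    (hp : ∀ x y, GammaLE n x y → p x ≤ p y) :
    ∃ l, IsMultichain n l ∧ pMap n l = p := by
  classical
  set A : ℕ → ℕ := fun v => Pext n p (n+1, v) with hA
  set B : ℕ → ℕ := fun v => Pext n p (n, v) with hB
  set Cc : ℕ → ℕ := fun v => Pext n p (n-1, v) with hCc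
  set r := A 1 with hr
  set Z : ℕ → ℕ := fun i => ((Finset.Icc 1 n).filter fun v => i + 1 ≤ A v).card with hZ
  set Y : ℕ → ℕ := fun i => ((Finset.Icc 1 n).filter fun v => i + 1 ≤ B v).card with hY
  set X : ℕ → ℕ := fun i => ((Finset.Icc 1 (n-1)).filter fun v => i + 1 ≤ Cc v).card with hX
  have hAanti := rowA_anti hn p hp
  have hBanti := rowB_anti hn p hp
  have hCanti := rowC_anti hn p hp
  -- recover characterizations
  have hZrec : ∀ i j, 1 ≤ j → j ≤ n → (i + 1 ≤ A j ↔ j ≤ Z i) := by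
    intro i j h1 h2; exact count_recover_Icc n (i+1) j A hAanti h1 h2
  have hYrec : ∀ i j, 1 ≤ j → j ≤ n → (i + 1 ≤ B j ↔ j ≤ Y i) := by
    intro i j h1 h2; exact count_recover_Icc n (i+1) j B hBanti h1 h2
  have hXrec : ∀ i j, 1 ≤ j → j ≤ n - 1 → (i + 1 ≤ Cc j ↔ j ≤ X i) := by
    intro i j h1 h2; exact count_recover_Icc (n-1) (i+1) j Cc hCanti h1 h2
  -- bounds
  have hXn : ∀ i, X i ≤ n - 1 := by
    intro i; rw [hX]
    calc ((Finset.Icc 1 (n-1)).filter fun v => i + 1 ≤ Cc v).card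
        ≤ (Finset.Icc 1 (n-1)).card := Finset.card_filter_le _ _
      _ = n - 1 := by rw [Nat.card_Icc]; omega
  have hZn : ∀ i, Z i ≤ n := by
    intro i; rw [hZ]
    calc ((Finset.Icc 1 n).filter fun v => i + 1 ≤ A v).card
        ≤ (Finset.Icc 1 n).card := Finset.card_filter_le _ _
      _ = n := by rw [Nat.card_Icc]; omega
  have hYn : ∀ i, Y i ≤ n := by
    intro i; rw [hY]
    calc ((Finset.Icc 1 n).filter fun v => i + 1 ≤ B v).card
        ≤ (Finset.Icc 1 n).card := Finset.card_filter_le _ _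
      _ = n := by rw [Nat.card_Icc]; omega
  have hXY : ∀ i, X i ≤ Y i := by
    intro i
    apply Finset.card_le_card
    intro v hv
    simp only [Finset.mem_filter, Finset.mem_Icc] at hv ⊢
    refine ⟨⟨hv.1.1, by omega⟩, le_trans hv.2 (CB_le hn p hp hv.1.1 hv.1.2)⟩
  have hYZ : ∀ i, Y i ≤ Z i := by
    intro i
    apply Finset.card_le_card
    intro v hv
    simp only [Finset.mem_filter, Finset.mem_Icc] at hv ⊢
    refine ⟨⟨hv.1.1, hv.1.2⟩, le_trans hv.2 (BA_le hn p hp hv.1.1 hv.1.2)⟩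
  have hYX1 : ∀ i, Y i ≤ X i + 1 := by
    intro i
    by_contra hcon
    push_neg at hcon
    have hjn : X i + 2 ≤ n := le_trans hcon (hYn i)
    have h1 : i + 1 ≤ B (X i + 2) := (hYrec i (X i + 2) (by omega) hjn).mpr (by omega)
    have h2 : i + 1 ≤ Cc (X i + 1) := by
      have := BC_le hn p hp (v := X i + 2) (by omega) hjn
      simp only [show X i + 2 - 1 = X i + 1 from rfl] at this
      exact le_trans h1 this
    have h3 : X i + 1 ≤ X i := (hXrec i (X i + 1) (by omega) (by omega)).mp h2
    omega
  have hZY1 : ∀ i, Z i ≤ Y i + 1 := by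
    intro i
    by_contra hcon
    push_neg at hcon
    have hjn : Y i + 2 ≤ n := le_trans hcon (hZn i)
    have h1 : i + 1 ≤ A (Y i + 2) := (hZrec i (Y i + 2) (by omega) hjn).mpr (by omega)
    have h2 : i + 1 ≤ B (Y i + 1) := by
      have := AB_le hn p hp (v := Y i + 2) (by omega) hjn
      simp only [show Y i + 2 - 1 = Y i + 1 from rfl] at this
      exact le_trans h1 this
    have h3 : Y i + 1 ≤ Y i := (hYrec i (Y i + 1) (by omega) (by omega)).mp h2
    omega
  have hZpos : ∀ i, i < r → 1 ≤ Z i := by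
    intro i hi
    rw [hZ]
    refine Finset.card_pos.mpr ⟨1, ?_⟩
    simp only [Finset.mem_filter, Finset.mem_Icc]
    exact ⟨⟨le_rfl, by omega⟩, by omega⟩
  -- the column list
  set col : ℕ → Finset (Fin (2*n)) :=
    fun i => genSet n (X i) (decide (X i < Y i)) (decide (Y i < Z i)) with hcol
  have hsY : ∀ i, X i + (decide (X i < Y i)).toNat = Y i := by
    intro i
    by_cases h : X i < Y i
    · simp [h]; have := hYX1 i; omega
    · simp [h]; have := hXY i; omega
  have htZ : ∀ i, X i + (decide (X i < Y i)).toNat + (decide (Y i < Z i)).toNat = Z i := by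
    intro i
    rw [hsY i]
    by_cases h : Y i < Z i
    · simp [h]; have := hZY1 i; omega
    · simp [h]; have := hYZ i; omega
  have hcolmem : ∀ i, i < r → col i ∈ LSet n := by
    intro i hi
    refine (mem_LSet_iff hn).mpr ⟨X i, _, _, hXn i, ?_, ?_, rfl⟩
    · rw [htZ i]; exact hZpos i hi
    · rw [htZ i]; exact hZn i
  have hm1 : ∀ i, mC n (col i) (n-1) = X i := fun i => mC_genSet_pred _ _ (hXn i) hn
  have hm2 : ∀ i, mC n (col i) n = Y i := by
    intro i; rw [hcol]; rw [mC_genSet_n _ _ (hXn i) hn]; exact hsY i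
  have hm3 : ∀ i, mC n (col i) (n+1) = Z i := by
    intro i; rw [hcol]; rw [mC_genSet_succ _ _ (hXn i) hn]; exact htZ i
  -- monotonicity in i
  have hXmono : ∀ u v, u ≤ v → X v ≤ X u := by
    refine anti_of_succ X (fun v => ?_)
    apply Finset.card_le_card
    intro w hw; simp only [Finset.mem_filter] at hw ⊢; exact ⟨hw.1, by omega⟩
  have hYmono : ∀ u v, u ≤ v → Y v ≤ Y u := by
    refine anti_of_succ Y (fun v => ?_)
    apply Finset.card_le_card
    intro w hw; simp only [Finset.mem_filter] at hw ⊢; exact ⟨hw.1, by omega⟩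
  have hZmono : ∀ u v, u ≤ v → Z v ≤ Z u := by
    refine anti_of_succ Z (fun v => ?_)
    apply Finset.card_le_card
    intro w hw; simp only [Finset.mem_filter] at hw ⊢; exact ⟨hw.1, by omega⟩
  refine ⟨(List.range r).map col, ⟨?_, ?_⟩, ?_⟩
  · intro C hC
    simp only [List.mem_map, List.mem_range] at hC
    obtain ⟨i, hi, rfl⟩ := hC
    exact hcolmem i hi
  · refine List.isChain_iff_getElem.mpr ?_
    intro i hlen
    simp only [List.length_map, List.length_range] at hlen
    have hget : ∀ (m : ℕ) (hm : m < r),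
        ((List.range r).map col).get ⟨m, by simp; omega⟩ = col m := by
      intro m hm; simp
    simp only [List.getElem_map, List.getElem_range]
    refine comp_to_LLE hn (X i + Y i + Z i) (col i) (col (i+1))
      (hcolmem i (by omega)) (hcolmem (i+1) (by omega)) ?_ ?_ ?_ ?_
    · rw [hm1, hm2, hm3]
    · rw [hm1, hm1]; exact hXmono i (i+1) (by omega)
    · rw [hm2, hm2]; exact hYmono i (i+1) (by omega)
    · rw [hm3, hm3]; exact hZmono i (i+1) (by omega)
  · funext q
    obtain ⟨⟨k, j⟩, hq⟩ := q
    obtain ⟨hk3, hj1, hj2⟩ := hq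
    refine (pMap_card _ _).trans ?_
    simp only [List.length_map, List.length_range]
    have hgetD : ∀ i, i < r → ((List.range r).map col).getD i ∅ = col i := by
      intro i hi
      rw [List.getD_eq_getElem _ ∅ (by simp; omega)]
      simp
    have hPq : p ⟨(k, j), ⟨hk3, hj1, hj2⟩⟩ = Pext n p (k, j) := by
      rw [Pext, dif_pos ⟨hk3, hj1, hj2⟩]
    rw [hPq]
    rcases hk3 with hk | hk | hk
    · -- k = n - 1
      replace hk : k = n - 1 := hk
      rw [hk] at hj2
      have hjle : j ≤ n - 1 := by omega
      have hstep : ((Finset.range r).filter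
            fun i => j ≤ mC n (((List.range r).map col).getD i ∅) k)
          = (Finset.range r).filter fun i => i + 1 ≤ Cc j := by
        apply Finset.filter_congr
        intro i hi
        simp only [Finset.mem_range] at hi
        rw [hgetD i hi, hk, hm1]
        exact ⟨fun h => (hXrec i j hj1 hjle).mpr h, fun h => (hXrec i j hj1 hjle).mp h⟩
      rw [hstep, range_filter_le_eq, Finset.card_range]
      have : Cc j ≤ r := le_trans (hCanti 1 j le_rfl hj1 hjle)
        (le_trans (CB_le hn p hp le_rfl (by omega)) (BA_le hn p hp le_rfl (by omega)))
      rw [show Pext n p (k, j) = Cc j by rw [hk]]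
      omega
    · -- k = n
      replace hk : k = n := hk
      rw [hk] at hj2
      have hjle : j ≤ n := by omega
      have hstep : ((Finset.range r).filter
            fun i => j ≤ mC n (((List.range r).map col).getD i ∅) k)
          = (Finset.range r).filter fun i => i + 1 ≤ B j := by
        apply Finset.filter_congr
        intro i hi
        simp only [Finset.mem_range] at hi
        rw [hgetD i hi, hk, hm2]
        exact ⟨fun h => (hYrec i j hj1 hjle).mpr h, fun h => (hYrec i j hj1 hjle).mp h⟩
      rw [hstep, range_filter_le_eq, Finset.card_range]
      have : B j ≤ r := le_trans (hBanti 1 j le_rfl hj1 hjle) (BA_le hn p hp le_rfl (by omega))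
      rw [show Pext n p (k, j) = B j by rw [hk]]
      omega
    · -- k = n + 1
      replace hk : k = n + 1 := hk
      rw [hk] at hj2
      have hjle : j ≤ n := by omega
      have hstep : ((Finset.range r).filter
            fun i => j ≤ mC n (((List.range r).map col).getD i ∅) k)
          = (Finset.range r).filter fun i => i + 1 ≤ A j := by
        apply Finset.filter_congr
        intro i hi
        simp only [Finset.mem_range] at hi
        rw [hgetD i hi, hk, hm3]
        exact ⟨fun h => (hZrec i j hj1 hjle).mpr h, fun h => (hZrec i j hj1 hjle).mp h⟩
      rw [hstep, range_filter_le_eq, Finset.card_range]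
      have : A j ≤ r := hAanti 1 j le_rfl hj1 hjle
      rw [show Pext n p (k, j) = A j by rw [hk]]
      omega


/-- `Δ ↦ p(Δ) = Σ_i χ_{S_{C_i}}` is a bijection from the set of multichains
in `𝓛` onto the monoid of order-preserving maps `Γ → ℤ_{≥0}`; moreover if `Δ` has shape
`F/D` then `p(Δ)(t_i^{(n+1)}) = f_i` and `p(Δ)(t_k^{(n−1)}) = d_k`. -/
theorem statement12 (n : ℕ) (hn : 2 ≤ n) :
    (∀ l : List (Finset (Fin (2*n))), IsMultichain n l →
      ∀ x y : Gamma n, GammaLE n x y → pMap n l x ≤ pMap n l y) ∧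
    (∀ l l' : List (Finset (Fin (2*n))), IsMultichain n l → IsMultichain n l' →
      pMap n l = pMap n l' → l = l') ∧
    (∀ p : Gamma n → ℕ, (∀ x y : Gamma n, GammaLE n x y → p x ≤ p y) →
      ∃ l : List (Finset (Fin (2*n))), IsMultichain n l ∧ pMap n l = p) ∧
    (∀ l : List (Finset (Fin (2*n))), IsMultichain n l →
      (∀ i, 1 ≤ i → i ≤ n → ∀ q : Gamma n, q.1 = (n+1, i) → pMap n l q = shapeF n l i) ∧
      (∀ k, 1 ≤ k → k ≤ n - 1 → ∀ q : Gamma n, q.1 = (n-1, k) → pMap n l q = shapeD n l k)) := by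
  refine ⟨?_, ?_, ?_, ?_⟩
  · intro l hl x y hxy
    exact List.sum_le_sum (fun C hC => chiS_mono hn (hl.1 C hC) hxy)
  · intro l l' hl hl' h
    exact pMap_inj hn hl hl' h
  · intro p hp
    exact pMap_surj hn p hp
  · intro l hl
    constructor
    · intro i _ _ q hq
      rw [pMap, shapeF]
      congr 1
      apply List.map_congr_left
      intro C hC
      have hcard := (mC_gap hn (hl.1 C hC)).2.2.2.2.2.2.2.2
      have e : chiS n C q = if i ≤ mC n C (n+1) then 1 else 0 := by
        simp only [chiS, hq]
      rw [e, hcard]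
    · intro k hk1 hk2 q hq
      rw [pMap, shapeD]
      congr 1
      apply List.map_congr_left
      intro C hC
      obtain ⟨m, s, t, hm, hlo, hhi, rfl⟩ := (mem_LSet_iff hn).mp (hl.1 C hC)
      have hiff : (∃ x : Fin (2*n), x ∈ genSet n m s t ∧ (x : ℕ) + 1 = k)
          ↔ k ≤ mC n (genSet n m s t) (n-1) := by
        rw [mC_genSet_pred s t hm hn]
        exact label_mem_genSet s t hm hn hk1 hk2
      have e : chiS n (genSet n m s t) q
          = if k ≤ mC n (genSet n m s t) (n-1) then 1 else 0 := by
        simp only [chiS, hq]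
      rw [e]
      simp only [hiff]


end SpBranch
end
end
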